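/- arXiv:1509.07282 — 11 statements merged into one kernel-verified Lean document; each statement's English description precedes it below -/
import Mathlib

section
/- Let L be a Lie algebra and B an L-algebra. If β : L → B is a 1-cocycle, i.e. β([x,y]) = x·β(y) − y·β(x) + β(x)β(y) for all x, y ∈ L, then the map θ : L → Der(B) given by θ(x)(b) = β(x)b + x·b is a Lie algebra homomorphism; in particular x ⊙ b := β(x)b + x·b defines a new L-algebra structure on B. -/
/-- If `β : L → B` is a `1`-cocycle of `L` with values in the `L`-algebra `B`,
i.e. `β([x,y]) = x·β(y) − y·β(x) + β(x)β(y)`, then `θ'(x)(b) = β(x)b + x·b`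
defines a Lie algebra homomorphism `L → Der(B)`; in particular
`x ⊙ b = β(x)b + x·b` is a new `L`-algebra structure on `B`. -/
theorem stmt1 {K L B : Type*} [Field K] [LieRing L] [LieAlgebra K L]
    [LieRing B] [LieAlgebra K B]
    (θ : L →ₗ⁅K⁆ LieDerivation K B B) (β : L →ₗ[K] B)
    (hβ : ∀ x y : L, β ⁅x, y⁆ = θ x (β y) - θ y (β x) + ⁅β x, β y⁆) :
    -- `f x` is a derivation of `B` for each `x` …
    (∀ (x : L) (b₁ b₂ : B),
        ⁅β x, ⁅b₁, b₂⁆⁆ + θ x ⁅b₁, b₂⁆ =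
          ⁅⁅β x, b₁⁆ + θ x b₁, b₂⁆ + ⁅b₁, ⁅β x, b₂⁆ + θ x b₂⁆) ∧
      (∀ (x : L) (b₁ b₂ : B),
        ⁅β x, b₁ + b₂⁆ + θ x (b₁ + b₂) = (⁅β x, b₁⁆ + θ x b₁) + (⁅β x, b₂⁆ + θ x b₂)) ∧
      (∀ (x : L) (k : K) (b : B),
        ⁅β x, k • b⁆ + θ x (k • b) = k • (⁅β x, b⁆ + θ x b)) ∧
      -- … and `x ↦ f x` is a Lie algebra homomorphism
      (∀ (x y : L) (b : B),
        ⁅β ⁅x, y⁆, b⁆ + θ ⁅x, y⁆ b =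
          (⁅β x, ⁅β y, b⁆ + θ y b⁆ + θ x (⁅β y, b⁆ + θ y b)) -
            (⁅β y, ⁅β x, b⁆ + θ x b⁆ + θ y (⁅β x, b⁆ + θ x b))) := by
  refine ⟨fun x b₁ b₂ => ?_, fun x b₁ b₂ => ?_, fun x k b => ?_, fun x y b => ?_⟩
  · rw [leibniz_lie, LieDerivation.apply_lie_eq_add, add_lie, lie_add]; abel
  · simp only [lie_add, map_add]; abel
  · simp only [lie_smul, map_smul, smul_add]
  · have h1 : θ ⁅x, y⁆ b = θ x (θ y b) - θ y (θ x b) := by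
      rw [LieHom.map_lie]
      rfl
    rw [hβ, h1]
    simp only [map_add, LieDerivation.apply_lie_eq_add, add_lie, sub_lie, lie_add, lie_lie]
    abel
end

section
/- Let A and B be L-algebras. If there exists a 1-cocycle β ∈ Z¹(L,B) and an L-isomorphism φ : A → B_β (meaning φ(x·a) = β(x)φ(a) + x·φ(a) for all x ∈ L, a ∈ A), then the map Φ : A ⋊ L → B ⋊ L given by Φ(a,x) = (φ(a) + β(x), x) is a Lie algebra isomorphism commuting with the canonical extension maps, so A and B are L-equivalent. -/
/-- The bracket of the semidirect sum `A ⋊ L`. -/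
def sdBracket {K L A : Type*} [Field K] [LieRing L] [LieAlgebra K L]
    [LieRing A] [LieAlgebra K A] (θ : L →ₗ⁅K⁆ LieDerivation K A A)
    (p q : A × L) : A × L :=
  (θ p.2 q.1 - θ q.2 p.1 + ⁅p.1, q.1⁆, ⁅p.2, q.2⁆)

/-- If `β ∈ Z¹(L,B)` is a `1`-cocycle and `φ : A → B_β` is an `L`-isomorphism
(`φ(x·a) = β(x)φ(a) + x·φ(a)`), then `Φ(a,x) = (φ(a) + β(x), x)` is a Lie
algebra isomorphism `A ⋊ L → B ⋊ L` commuting with the canonical extension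
maps, so `A` and `B` are `L`-equivalent. -/
theorem stmt2 {K L A B : Type*} [Field K] [LieRing L] [LieAlgebra K L]
    [LieRing A] [LieAlgebra K A] [LieRing B] [LieAlgebra K B]
    (θA : L →ₗ⁅K⁆ LieDerivation K A A) (θB : L →ₗ⁅K⁆ LieDerivation K B B)
    (β : L →ₗ[K] B)
    (hβ : ∀ x y : L, β ⁅x, y⁆ = θB x (β y) - θB y (β x) + ⁅β x, β y⁆)
    (φ : A ≃ₗ[K] B)
    (hφbr : ∀ a a' : A, φ ⁅a, a'⁆ = ⁅φ a, φ a'⁆)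
    (hφ : ∀ (x : L) (a : A), φ (θA x a) = ⁅β x, φ a⁆ + θB x (φ a)) :
    Function.Bijective (fun p : A × L => ((φ p.1 + β p.2, p.2) : B × L)) ∧
      (∀ p q : A × L,
        ((φ (p + q).1 + β (p + q).2, (p + q).2) : B × L) =
          (φ p.1 + β p.2, p.2) + (φ q.1 + β q.2, q.2)) ∧
      (∀ (k : K) (p : A × L),
        ((φ (k • p).1 + β (k • p).2, (k • p).2) : B × L) =
          k • ((φ p.1 + β p.2, p.2) : B × L)) ∧
      (∀ p q : A × L,
        ((φ (sdBracket θA p q).1 + β (sdBracket θA p q).2, (sdBracket θA p q).2) : B × L) =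
          sdBracket θB (φ p.1 + β p.2, p.2) (φ q.1 + β q.2, q.2)) ∧
      (∀ a : A, ((φ a + β 0, (0 : L)) : B × L) = (φ a, 0)) ∧
      (∀ p : A × L, ((φ p.1 + β p.2, p.2) : B × L).2 = p.2) := by
  refine ⟨?_, ?_, ?_, ?_, ?_, ?_⟩
  · constructor
    · intro p q h
      simp only [Prod.mk.injEq] at h
      obtain ⟨h1, h2⟩ := h
      rw [h2] at h1
      exact Prod.ext (φ.injective (add_right_cancel h1)) h2
    · intro q
      exact ⟨(φ.symm (q.1 - β q.2), q.2), by simp⟩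
  · intro p q; simp; abel
  · intro k p; simp [Prod.smul_def, smul_add]
  · intro p q
    simp only [sdBracket, map_add, map_sub, hφ, hφbr, hβ, Prod.mk.injEq, lie_add, add_lie]
    constructor
    · rw [← lie_skew (β q.2) (φ p.1)]; abel
    · trivial
  · intro a; simp
  · intro p; rfl
end

section
/- Let A and B be L-algebras that are L-equivalent via an isomorphism Φ : A ⋊ L → B ⋊ L commuting with the extension maps. Define β : L → B by β(x) = π₁(Φ(0,x) − (0,x)), where π₁ is the projection onto B. Then β is a 1-cocycle in Z¹(L,B), and the restriction of Φ to A yields an L-isomorphism from A to B_β. -/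
theorem Function.bijective_fst_of_snd_eq {α β γ : Type*} (Φ : α × γ ≃ β × γ)
    (h : ∀ p, (Φ p).2 = p.2) (c : γ) : Function.Bijective fun a => (Φ (a, c)).1 := by
  refine ⟨fun a a' haa' => ?_, fun b => ⟨(Φ.symm (b, c)).1, ?_⟩⟩
  · have : Φ (a, c) = Φ (a', c) := Prod.ext haa' (by rw [h, h])
    exact congrArg Prod.fst (Φ.injective this)
  · have hsnd : (Φ.symm (b, c)).2 = c := by simpa using (h (Φ.symm (b, c))).symm
    have hfib : ((Φ.symm (b, c)).1, c) = Φ.symm (b, c) := Prod.ext rfl hsnd.symm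
    simp only [hfib, Equiv.apply_symm_apply]

section SemidirectSum

variable {K L A : Type*} [Field K] [LieRing L] [LieAlgebra K L] [LieRing A] [LieAlgebra K A]
  (θ : L →ₗ⁅K⁆ LieDerivation K A A)

theorem sdBracket_inr_inr (x y : L) : sdBracket θ (0, x) (0, y) = (0, ⁅x, y⁆) := by
  simp [sdBracket]

theorem sdBracket_inl_inl (a a' : A) : sdBracket θ (a, 0) (a', 0) = (⁅a, a'⁆, 0) := by
  simp [sdBracket]

theorem sdBracket_inr_inl (x : L) (a : A) : sdBracket θ (0, x) (a, 0) = (θ x a, 0) := by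
  simp [sdBracket]

theorem sdBracket_inl_right (p : A × L) (a : A) :
    sdBracket θ p (a, 0) = (⁅p.1, a⁆ + θ p.2 a, 0) := by
  simp [sdBracket, add_comm]

end SemidirectSum

/-- If `A` and `B` are `L`-equivalent via an isomorphism `Φ : A ⋊ L → B ⋊ L`
commuting with the extension maps, then `β(x) = π₁(Φ(0,x) − (0,x))` is a
`1`-cocycle in `Z¹(L,B)` and the restriction `φ(a) = π₁(Φ(a,0))` of `Φ` to `A`
is an `L`-isomorphism from `A` to `B_β`. -/
theorem stmt3 {K L A B : Type*} [Field K] [LieRing L] [LieAlgebra K L]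
    [LieRing A] [LieAlgebra K A] [LieRing B] [LieAlgebra K B]
    (θA : L →ₗ⁅K⁆ LieDerivation K A A) (θB : L →ₗ⁅K⁆ LieDerivation K B B)
    (Φ : (A × L) ≃ₗ[K] (B × L))
    (hbr : ∀ p q : A × L, Φ (sdBracket θA p q) = sdBracket θB (Φ p) (Φ q))
    (hproj : ∀ p : A × L, (Φ p).2 = p.2) :
    -- `β` is a 1-cocycle
    (∀ x y : L,
      (Φ (0, ⁅x, y⁆)).1 =
        θB x ((Φ (0, y)).1) - θB y ((Φ (0, x)).1) + ⁅(Φ (0, x)).1, (Φ (0, y)).1⁆) ∧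
    -- `φ` is an algebra isomorphism from `A` onto `B`
    Function.Bijective (fun a : A => (Φ (a, 0)).1) ∧
      (∀ a a' : A, (Φ (a + a', 0)).1 = (Φ (a, 0)).1 + (Φ (a', 0)).1) ∧
      (∀ (k : K) (a : A), (Φ (k • a, 0)).1 = k • (Φ (a, 0)).1) ∧
      (∀ a a' : A, (Φ (⁅a, a'⁆, 0)).1 = ⁅(Φ (a, 0)).1, (Φ (a', 0)).1⁆) ∧
      -- … which intertwines the `L`-action on `A` with the `β`-twisted action on `B`
      (∀ (x : L) (a : A),
        (Φ (θA x a, 0)).1 = ⁅(Φ (0, x)).1, (Φ (a, 0)).1⁆ + θB x ((Φ (a, 0)).1)) := by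
  have hinr (x : L) : Φ (0, x) = ((Φ (0, x)).1, x) := Prod.ext rfl (hproj _)
  have hinl (a : A) : Φ (a, 0) = ((Φ (a, 0)).1, 0) := Prod.ext rfl (hproj _)
  let φ : A →ₗ[K] B := LinearMap.fst K B L ∘ₗ Φ.toLinearMap ∘ₗ LinearMap.inl K A L
  refine ⟨fun x y => ?_, Function.bijective_fst_of_snd_eq Φ.toEquiv hproj 0, φ.map_add,
    φ.map_smul, fun a a' => ?_, fun x a => ?_⟩
  · have h := congrArg Prod.fst (hbr (0, x) (0, y))
    rwa [sdBracket_inr_inr, hinr x, hinr y] at h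
  · have h := congrArg Prod.fst (hbr (a, 0) (a', 0))
    rwa [sdBracket_inl_inl, hinl a, hinl a', sdBracket_inl_inl] at h
  · have h := congrArg Prod.fst (hbr (0, x) (a, 0))
    rwa [sdBracket_inr_inl, hinr x, hinl a, sdBracket_inl_right] at h
end

section
/- Let L be a finite-dimensional Lie algebra, let A₁/B₁ be a nonabelian chief factor of L, and suppose there exists an L-algebra B with A₁/B₁ ∼_L B (L-equivalent) and A₁ ⊆ C_L(B). Then A₁/B₁ is complemented in L: there is a subalgebra M with L = A₁ + M and A₁ ∩ M = B₁. Moreover, if α ∈ Z¹(L, A₁/B₁) is the cocycle witnessing the equivalence, then M = ker(α) is such a complement. -/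
/-- `A/B` is a chief factor of `L`. -/
def IsChiefFactor {K L : Type*} [Field K] [LieRing L] [LieAlgebra K L]
    (A B : LieIdeal K L) : Prop :=
  B < A ∧ ∀ C : LieIdeal K L, B ≤ C → C ≤ A → C = B ∨ C = A

/-- Let `A₁/B₁` be a nonabelian chief factor of `L` and suppose there is an
`L`-algebra `B` with `A₁/B₁ ∼_L B` and `A₁ ⊆ C_L(B)`.  The equivalence is
witnessed (Proposition 1) by a 1-cocycle `α ∈ Z¹(L, A₁/B₁)` (represented here
by a linear map `α : L → L` with values in `A₁`, read modulo `B₁`) and an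
`L`-isomorphism `φ : B → (A₁/B₁)_α`.  Then `A₁/B₁` is complemented in `L`,
and `M = ker α` is a complement. -/
theorem stmt8 {K L B : Type*} [Field K] [LieRing L] [LieAlgebra K L]
    [FiniteDimensional K L] [LieRing B] [LieAlgebra K B]
    (A₁ B₁ : LieIdeal K L) (hle : B₁ ≤ A₁) (hchief : IsChiefFactor A₁ B₁)
    (hnonab : ∃ a ∈ A₁, ∃ b ∈ A₁, ⁅a, b⁆ ∉ B₁)
    (θB : L →ₗ⁅K⁆ LieDerivation K B B)
    (hcent : ∀ x ∈ A₁, ∀ b : B, θB x b = 0)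
    (α : L →ₗ[K] L) (hαA : ∀ x : L, α x ∈ A₁)
    (hαcoc : ∀ x y : L, α ⁅x, y⁆ - (⁅x, α y⁆ - ⁅y, α x⁆ + ⁅α x, α y⁆) ∈ B₁)
    (φ : B → L) (hφA : ∀ b : B, φ b ∈ A₁)
    (hφadd : ∀ b b' : B, φ (b + b') - φ b - φ b' ∈ B₁)
    (hφsmul : ∀ (k : K) (b : B), φ (k • b) - k • φ b ∈ B₁)
    (hφbr : ∀ b b' : B, φ ⁅b, b'⁆ - ⁅φ b, φ b'⁆ ∈ B₁)
    (hφinj : ∀ b : B, φ b ∈ B₁ → b = 0)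
    (hφsurj : ∀ a ∈ A₁, ∃ b : B, φ b - a ∈ B₁)
    (hφequiv : ∀ (x : L) (b : B), φ (θB x b) - (⁅α x, φ b⁆ + ⁅x, φ b⁆) ∈ B₁) :
    ∃ M : LieSubalgebra K L, (M : Set L) = {x : L | α x ∈ B₁} ∧
      (∀ x : L, ∃ a ∈ A₁, ∃ m ∈ M, x = a + m) ∧
      (∀ x : L, (x ∈ A₁ ∧ x ∈ M) ↔ x ∈ B₁) := by
  classical
  -- φ 0 ∈ B₁
  have hφ0 : φ 0 ∈ B₁ := by
    have h := hφadd 0 0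
    simp only [add_zero] at h
    have h' : -φ 0 ∈ B₁ := by
      have : φ 0 - φ 0 - φ 0 = -φ 0 := by abel
      rwa [this] at h
    simpa using B₁.neg_mem h'
  -- the ideal C = {a ∈ A₁ | [a, A₁] ⊆ B₁}
  let C : LieIdeal K L :=
    { carrier := {a | a ∈ A₁ ∧ ∀ a' ∈ A₁, ⁅a, a'⁆ ∈ B₁}
      add_mem' := fun {a b} ha hb => ⟨A₁.add_mem ha.1 hb.1, fun a' ha' => by
        rw [add_lie]; exact B₁.add_mem (ha.2 a' ha') (hb.2 a' ha')⟩
      zero_mem' := ⟨A₁.zero_mem, fun a' ha' => by rw [zero_lie]; exact B₁.zero_mem⟩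
      smul_mem' := fun k a ha => ⟨A₁.smul_mem k ha.1, fun a' ha' => by
        rw [smul_lie]; exact B₁.smul_mem k (ha.2 a' ha')⟩
      lie_mem := fun {x c} hc => ⟨A₁.lie_mem hc.1, fun a' ha' => by
        rw [lie_lie]; exact B₁.sub_mem (B₁.lie_mem (hc.2 a' ha')) (hc.2 _ (A₁.lie_mem ha'))⟩ }
  have hB₁C : B₁ ≤ C := by
    intro b hb
    refine ⟨hle hb, fun a' ha' => ?_⟩
    rw [← lie_skew]
    exact B₁.neg_mem (B₁.lie_mem hb)
  have hCA : C ≤ A₁ := fun c hc => hc.1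
  have hCB : C = B₁ := by
    rcases hchief.2 C hB₁C hCA with h | h
    · exact h
    · exfalso
      obtain ⟨a, ha, b, hb, hab⟩ := hnonab
      have haC : a ∈ C := h ▸ ha
      exact hab (haC.2 b hb)
  -- key : for a ∈ A₁, α a + a ∈ B₁
  have key : ∀ x ∈ A₁, α x + x ∈ B₁ := by
    intro x hx
    have hC : α x + x ∈ C := by
      refine ⟨A₁.add_mem (hαA x) hx, fun a' ha' => ?_⟩
      obtain ⟨b, hb⟩ := hφsurj a' ha'
      have h1 := hφequiv x b
      rw [hcent x hx b] at h1
      have h2 : ⁅α x, φ b⁆ + ⁅x, φ b⁆ ∈ B₁ := by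
        have h3 := B₁.sub_mem hφ0 h1
        have : φ 0 - (φ 0 - (⁅α x, φ b⁆ + ⁅x, φ b⁆)) = ⁅α x, φ b⁆ + ⁅x, φ b⁆ := by abel
        rwa [this] at h3
      have h3 : ⁅α x + x, φ b - a'⁆ ∈ B₁ := B₁.lie_mem hb
      have heq : ⁅α x + x, a'⁆ = (⁅α x, φ b⁆ + ⁅x, φ b⁆) - ⁅α x + x, φ b - a'⁆ := by
        simp only [add_lie, lie_sub]; abel
      rw [heq]
      exact B₁.sub_mem h2 h3
    rwa [hCB] at hC
  refine ⟨{ carrier := {x : L | α x ∈ B₁}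
            add_mem' := fun {a b} ha hb => by
              simp only [Set.mem_setOf_eq, map_add]; exact B₁.add_mem ha hb
            zero_mem' := by simp only [Set.mem_setOf_eq, map_zero]; exact B₁.zero_mem
            smul_mem' := fun k a ha => by
              simp only [Set.mem_setOf_eq, map_smul]; exact B₁.smul_mem k ha
            lie_mem' := fun {x y} hx hy => by
              simp only [Set.mem_setOf_eq] at hx hy ⊢
              have h := hαcoc x y
              have h2 : ⁅x, α y⁆ - ⁅y, α x⁆ + ⁅α x, α y⁆ ∈ B₁ :=
                B₁.add_mem (B₁.sub_mem (B₁.lie_mem hy) (B₁.lie_mem hx)) (B₁.lie_mem hy)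
              have h3 := B₁.add_mem h h2
              have heq : α ⁅x, y⁆ - (⁅x, α y⁆ - ⁅y, α x⁆ + ⁅α x, α y⁆) +
                  (⁅x, α y⁆ - ⁅y, α x⁆ + ⁅α x, α y⁆) = α ⁅x, y⁆ := by abel
              rwa [heq] at h3 }, rfl, ?_, ?_⟩
  · intro x
    refine ⟨-α x, A₁.neg_mem (hαA x), x + α x, ?_, by abel⟩
    show α (x + α x) ∈ B₁
    rw [map_add, add_comm]
    exact key (α x) (hαA x)
  · intro x
    constructor
    · rintro ⟨hxA, hxM⟩
      have hxM' : α x ∈ B₁ := hxM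
      have h1 := key x hxA
      have heq : x = (α x + x) - α x := by abel
      rw [heq]
      exact B₁.sub_mem h1 hxM'
    · intro hx
      have hxA : x ∈ A₁ := hle hx
      refine ⟨hxA, ?_⟩
      show α x ∈ B₁
      have h1 := key x hxA
      have heq : α x = (α x + x) - x := by abel
      rw [heq]
      exact B₁.sub_mem h1 hx
end

section
/- Let L be a finite-dimensional Lie algebra and let A/B and D/E be nonabelian chief factors of L that are L-equivalent but not L-isomorphic. Set X = C_L(A/B), Y = C_L(D/E), and I = I_L(A/B) = I_L(D/E). Then X ≠ Y, I = X + Y, X/(X ∩ Y) ≅_L D/E, and Y/(X ∩ Y) ≅_L A/B. -/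
/-- `A/B ≅_L D/E`: an `L`-isomorphism between the factors, described via a map
on representatives. -/
def LIsoFactors (K : Type*) {L : Type*} [Field K] [LieRing L] [LieAlgebra K L]
    (A B D E : Set L) : Prop :=
  ∃ φ : L → L,
    (∀ a ∈ A, φ a ∈ D) ∧ (∀ a ∈ B, φ a ∈ E) ∧
    (∀ a ∈ A, ∀ b ∈ A, φ (a + b) - φ a - φ b ∈ E) ∧
    (∀ (k : K), ∀ a ∈ A, φ (k • a) - k • φ a ∈ E) ∧
    (∀ a ∈ A, φ a ∈ E → a ∈ B) ∧
    (∀ d ∈ D, ∃ a ∈ A, φ a - d ∈ E) ∧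
    (∀ a ∈ A, ∀ b ∈ A, φ ⁅a, b⁆ - ⁅φ a, φ b⁆ ∈ E) ∧
    (∀ x : L, ∀ a ∈ A, φ ⁅x, a⁆ - ⁅x, φ a⁆ ∈ E)

/-- `A/B ∼_L D/E`: `L`-equivalence, i.e. a 1-cocycle `β ∈ Z¹(L, D/E)` and an
`L`-isomorphism `φ : A/B → (D/E)_β`, described via representatives. -/
def LEquivFactors (K : Type*) {L : Type*} [Field K] [LieRing L] [LieAlgebra K L]
    (A B D E : Set L) : Prop :=
  ∃ φ β : L → L,
    (∀ a ∈ A, φ a ∈ D) ∧ (∀ a ∈ B, φ a ∈ E) ∧ (∀ x : L, β x ∈ D) ∧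
    (∀ a ∈ A, ∀ b ∈ A, φ (a + b) - φ a - φ b ∈ E) ∧
    (∀ (k : K), ∀ a ∈ A, φ (k • a) - k • φ a ∈ E) ∧
    (∀ a ∈ A, φ a ∈ E → a ∈ B) ∧
    (∀ d ∈ D, ∃ a ∈ A, φ a - d ∈ E) ∧
    (∀ a ∈ A, ∀ b ∈ A, φ ⁅a, b⁆ - ⁅φ a, φ b⁆ ∈ E) ∧
    (∀ x y : L, β ⁅x, y⁆ - (⁅x, β y⁆ - ⁅y, β x⁆ + ⁅β x, β y⁆) ∈ E) ∧
    (∀ x : L, ∀ a ∈ A, φ ⁅x, a⁆ - (⁅β x, φ a⁆ + ⁅x, φ a⁆) ∈ E)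

/-!
Write `X = C_L(A/B)` and `Y = C_L(D/E)`. Minimality of the chief factors together with
nonabelianness gives `A ∩ X = B` and `D ∩ Y = E`, and the cocycle description of
`L`-equivalence shows `A + X = D + Y`, the common ideal `I`. If `X = Y`, projecting
`A ≤ D + Y` onto `D` modulo `Y` would be an `L`-isomorphism `A/B ≅ D/E`. Otherwise
minimality again, via the modular law, puts `A` or `D` inside `X + Y`, so `X + Y = I`, and
the two isomorphisms are the projections `X/(X ∩ Y) ≅ (X + Y)/Y = (D + Y)/Y ≅ D/E` and
`Y/(X ∩ Y) ≅ (X + Y)/X = (A + X)/X ≅ A/B`.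
-/

lemma le_of_sup_inf_eq {α : Type*} [Lattice α] [IsModularLattice α] {x y d e : α}
    (hx : x ≤ d ⊔ y) (hd : (x ⊔ y) ⊓ d = e) (he : e ≤ y) : x ≤ y :=
  calc x ≤ (y ⊔ d) ⊓ (x ⊔ y) := le_inf (sup_comm d y ▸ hx) le_sup_left
    _ = y ⊔ (x ⊔ y) ⊓ d := by rw [sup_inf_assoc_of_le d le_sup_right, inf_comm d]
    _ ≤ y := sup_le le_rfl (hd ▸ he)

section

variable {K L : Type*} [Field K] [LieRing L] [LieAlgebra K L]

lemma IsChiefFactor.inf_eq_or_le {A B C : LieIdeal K L} (h : IsChiefFactor A B) (hBC : B ≤ C) :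
    C ⊓ A = B ∨ A ≤ C :=
  (h.2 (C ⊓ A) (le_inf hBC h.1.le) inf_le_right).imp id inf_eq_right.mp

def factorCentralizer (A B : LieIdeal K L) : LieIdeal K L where
  carrier := {x | ∀ a ∈ A, ⁅x, a⁆ ∈ B}
  add_mem' hx hy a ha := by rw [add_lie]; exact add_mem (hx a ha) (hy a ha)
  zero_mem' a _ := by rw [zero_lie]; exact zero_mem B
  smul_mem' k _ hx a ha := by rw [smul_lie]; exact B.smul_mem k (hx a ha)
  lie_mem {x _} hm a ha := by
    rw [lie_lie]; exact sub_mem (B.lie_mem (hm a ha)) (hm _ (A.lie_mem ha))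

lemma mem_factorCentralizer {A B : LieIdeal K L} {x : L} :
    x ∈ factorCentralizer A B ↔ ∀ a ∈ A, ⁅x, a⁆ ∈ B := Iff.rfl

lemma le_factorCentralizer (A B : LieIdeal K L) : B ≤ factorCentralizer A B :=
  fun b hb a _ => lie_mem_left K L B b a hb

lemma inf_factorCentralizer_eq {A B : LieIdeal K L} (h : IsChiefFactor A B)
    (hnonab : ∃ a ∈ A, ∃ b ∈ A, ⁅a, b⁆ ∉ B) : A ⊓ factorCentralizer A B = B := by
  rcases h.inf_eq_or_le (le_factorCentralizer A B) with hB | hA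
  · rwa [inf_comm]
  · obtain ⟨a, ha, b, hb, hab⟩ := hnonab
    exact absurd (mem_factorCentralizer.mp (hA ha) b hb) hab

lemma coe_sup_factorCentralizer (A B : LieIdeal K L) :
    ((A ⊔ factorCentralizer A B : LieIdeal K L) : Set L) =
      {x | ∃ a ∈ A, ∀ c ∈ A, ⁅x, c⁆ - ⁅a, c⁆ ∈ B} := by
  ext x
  simp only [SetLike.mem_coe, LieSubmodule.mem_sup, mem_factorCentralizer, Set.mem_ofPred_eq]
  constructor
  · rintro ⟨a, ha, u, hu, rfl⟩
    exact ⟨a, ha, fun c hc => by simpa only [add_lie, add_sub_cancel_left] using hu c hc⟩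
  · rintro ⟨a, ha, hx⟩
    exact ⟨a, ha, x - a, fun c hc => by simpa only [sub_lie] using hx c hc, add_sub_cancel a x⟩

lemma coe_sup_eq_setOf_add (P Q : LieIdeal K L) :
    ((P ⊔ Q : LieIdeal K L) : Set L) = {x | ∃ u ∈ (P : Set L), ∃ v ∈ (Q : Set L), x = u + v} := by
  ext x
  simp only [SetLike.mem_coe, LieSubmodule.mem_sup, Set.mem_ofPred_eq, eq_comm]

lemma exists_proj_of_mem_sup (P Q : LieIdeal K L) :
    ∃ ψ : L → L, ∀ l ∈ P ⊔ Q, ψ l ∈ P ∧ l - ψ l ∈ Q := by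
  choose! ψ hψ ζ hζ hsum using fun l (hl : l ∈ P ⊔ Q) => (LieSubmodule.mem_sup P Q l).mp hl
  exact ⟨ψ, fun l hl => ⟨hψ l hl, eq_sub_of_add_eq' (hsum l hl) ▸ hζ l hl⟩⟩

lemma lIsoFactors_of_sup_eq {P Q S : LieIdeal K L} (h : S ⊔ Q = P ⊔ Q) :
    LIsoFactors K (S : Set L) ((S ⊓ Q : LieIdeal K L) : Set L) (P : Set L)
      ((P ⊓ Q : LieIdeal K L) : Set L) := by
  obtain ⟨ψ, hψ⟩ := exists_proj_of_mem_sup P Q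
  have hS : ∀ s ∈ S, s ∈ P ⊔ Q := fun s hs => h ▸ LieSubmodule.mem_sup_left hs
  have hψP : ∀ s ∈ S, ψ s ∈ P := fun s hs => (hψ s (hS s hs)).1
  have hψQ : ∀ s ∈ S, s - ψ s ∈ Q := fun s hs => (hψ s (hS s hs)).2
  have hcongr : ∀ s ∈ S, ∀ p ∈ P, s - p ∈ Q → ψ s - p ∈ P ⊓ Q := fun s hs p hp hsp =>
    (LieSubmodule.mem_inf P Q _).mpr ⟨sub_mem (hψP s hs) hp,
      sub_sub_sub_cancel_left p (ψ s) s ▸ sub_mem hsp (hψQ s hs)⟩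
  refine ⟨ψ, hψP, fun a ha => ?_, fun a ha b hb => ?_, fun k a ha => ?_, fun a ha hψa => ?_,
    fun d hd => ?_, fun a ha b hb => ?_, fun x a ha => ?_⟩
  · have ha := (LieSubmodule.mem_inf S Q a).mp ha
    simpa using hcongr a ha.1 0 (zero_mem P) (by simpa using ha.2)
  · rw [sub_sub]
    refine hcongr _ (add_mem ha hb) _ (add_mem (hψP a ha) (hψP b hb)) ?_
    rw [add_sub_add_comm]
    exact add_mem (hψQ a ha) (hψQ b hb)
  · refine hcongr _ (S.smul_mem k ha) _ (P.smul_mem k (hψP a ha)) ?_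
    rw [← smul_sub]
    exact Q.smul_mem k (hψQ a ha)
  · have hψa := ((LieSubmodule.mem_inf P Q _).mp hψa).2
    exact (LieSubmodule.mem_inf S Q a).mpr
      ⟨ha, sub_add_cancel a (ψ a) ▸ add_mem (hψQ a ha) hψa⟩
  · obtain ⟨s, hs, q, hq, rfl⟩ := (LieSubmodule.mem_sup S Q d).mp (h ▸ LieSubmodule.mem_sup_left hd)
    exact ⟨s, hs, hcongr s hs _ hd (by simpa using neg_mem hq)⟩
  · refine hcongr _ (S.lie_mem hb) _ (P.lie_mem (hψP b hb)) ?_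
    have hsplit : ⁅a, b⁆ - ⁅ψ a, ψ b⁆ = ⁅a - ψ a, b⁆ + ⁅ψ a, b - ψ b⁆ := by
      rw [sub_lie, lie_sub]; abel
    rw [hsplit]
    exact add_mem (lie_mem_left K L Q _ b (hψQ a ha)) (Q.lie_mem (hψQ b hb))
  · refine hcongr _ (S.lie_mem ha) _ (P.lie_mem (hψP a ha)) ?_
    rw [← lie_sub]
    exact Q.lie_mem (hψQ a ha)

lemma mem_factorCentralizer_of_lie_image_mem {A D E : LieIdeal K L} {φ : L → L}
    (hsurj : ∀ d ∈ D, ∃ a ∈ A, φ a - d ∈ E) {v : L} (hv : ∀ a ∈ A, ⁅v, φ a⁆ ∈ E) :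
    v ∈ factorCentralizer D E := fun d hd => by
  obtain ⟨a, ha, had⟩ := hsurj d hd
  rw [← sub_sub_self (φ a) d, lie_sub]
  exact sub_mem (hv a ha) (E.lie_mem had)

lemma sup_factorCentralizer_le_of_lEquivFactors {A B D E : LieIdeal K L}
    (h : LEquivFactors K (A : Set L) (B : Set L) (D : Set L) (E : Set L)) :
    A ⊔ factorCentralizer A B ≤ D ⊔ factorCentralizer D E := by
  obtain ⟨φ, β, hφD, hφB, hβD, -, -, -, hsurj, hmul, -, hact⟩ := h
  refine sup_le (fun a ha => ?_) (fun x hx => ?_)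
  · have hY : β a + a - φ a ∈ factorCentralizer D E :=
      mem_factorCentralizer_of_lie_image_mem hsurj fun c hc => by
        have hsplit : ⁅β a + a - φ a, φ c⁆ =
            (φ ⁅a, c⁆ - ⁅φ a, φ c⁆) - (φ ⁅a, c⁆ - (⁅β a, φ c⁆ + ⁅a, φ c⁆)) := by
          rw [sub_lie, add_lie]; abel
        rw [hsplit]
        exact sub_mem (hmul a ha c hc) (hact a c hc)
    exact (LieSubmodule.mem_sup _ _ a).mpr
      ⟨φ a - β a, sub_mem (hφD a ha) (hβD a), _, hY, by abel⟩
  · have hY : x + β x ∈ factorCentralizer D E :=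
      mem_factorCentralizer_of_lie_image_mem hsurj fun c hc => by
        have hsplit : ⁅x + β x, φ c⁆ = φ ⁅x, c⁆ - (φ ⁅x, c⁆ - (⁅β x, φ c⁆ + ⁅x, φ c⁆)) := by
          rw [add_lie]; abel
        rw [hsplit]
        exact sub_mem (hφB _ (hx c hc)) (hact x c hc)
    exact (LieSubmodule.mem_sup _ _ x).mpr ⟨-β x, neg_mem (hβD x), _, hY, by abel⟩

lemma mem_sup_factorCentralizer_of_lie_image {A B D E : LieIdeal K L} {φ : L → L}
    (hadd : ∀ a ∈ A, ∀ b ∈ A, φ (a + b) - φ a - φ b ∈ E)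
    (hinj : ∀ a ∈ A, φ a ∈ E → a ∈ B) (hsurj : ∀ d ∈ D, ∃ a ∈ A, φ a - d ∈ E)
    (hmul : ∀ a ∈ A, ∀ b ∈ A, φ ⁅a, b⁆ - ⁅φ a, φ b⁆ ∈ E)
    {z w : L} (hw : w ∈ D) (hzw : ∀ a ∈ A, φ ⁅z, a⁆ - ⁅w, φ a⁆ ∈ E) :
    z ∈ A ⊔ factorCentralizer A B := by
  obtain ⟨a', ha', hwa'⟩ := hsurj w hw
  have hX : z - a' ∈ factorCentralizer A B := fun a ha => by
    have hu : ⁅z - a', a⁆ ∈ A := A.lie_mem ha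
    refine hinj _ hu ?_
    -- `φ ⁅z - a', a⁆ ≡ ⁅w, φ a⁆ - ⁅φ a', φ a⁆ = ⁅w - φ a', φ a⁆ ≡ 0` modulo `E`
    have hsplit : φ ⁅z - a', a⁆ =
        -(φ (⁅z - a', a⁆ + ⁅a', a⁆) - φ ⁅z - a', a⁆ - φ ⁅a', a⁆) + (φ ⁅z, a⁆ - ⁅w, φ a⁆)
          - ⁅φ a' - w, φ a⁆ - (φ ⁅a', a⁆ - ⁅φ a', φ a⁆) := by
      rw [sub_lie, sub_lie, sub_add_cancel]; abel
    rw [hsplit]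
    exact sub_mem (sub_mem (add_mem (neg_mem (hadd _ hu _ (A.lie_mem ha))) (hzw a ha))
      (lie_mem_left K L E _ _ hwa')) (hmul a' ha' a ha)
  exact (LieSubmodule.mem_sup _ _ z).mpr ⟨a', ha', z - a', hX, add_sub_cancel a' z⟩

lemma sup_factorCentralizer_ge_of_lEquivFactors {A B D E : LieIdeal K L}
    (h : LEquivFactors K (A : Set L) (B : Set L) (D : Set L) (E : Set L)) :
    D ⊔ factorCentralizer D E ≤ A ⊔ factorCentralizer A B := by
  obtain ⟨φ, β, hφD, -, hβD, hadd, -, hinj, hsurj, hmul, -, hact⟩ := h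
  refine sup_le (fun d hd => ?_) (fun y hy => ?_)
  · refine mem_sup_factorCentralizer_of_lie_image hadd hinj hsurj hmul
      (add_mem (hβD d) hd) fun a ha => ?_
    rw [add_lie]
    exact hact d a ha
  · refine mem_sup_factorCentralizer_of_lie_image hadd hinj hsurj hmul (hβD y) fun a ha => ?_
    rw [← sub_add_cancel (φ ⁅y, a⁆ - ⁅β y, φ a⁆) ⁅y, φ a⁆, sub_sub]
    exact add_mem (hact y a ha) (hy _ (hφD a ha))

lemma sup_factorCentralizer_eq_of_lEquivFactors {A B D E : LieIdeal K L}
    (h : LEquivFactors K (A : Set L) (B : Set L) (D : Set L) (E : Set L)) :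
    A ⊔ factorCentralizer A B = D ⊔ factorCentralizer D E :=
  le_antisymm (sup_factorCentralizer_le_of_lEquivFactors h)
    (sup_factorCentralizer_ge_of_lEquivFactors h)

lemma sup_eq_of_isChiefFactor {A B D E X Y : LieIdeal K L} (h₁ : IsChiefFactor A B)
    (h₂ : IsChiefFactor D E) (hBX : B ≤ X) (hEY : E ≤ Y) (hI : A ⊔ X = D ⊔ Y) (hXY : X ≠ Y) :
    X ⊔ Y = A ⊔ X := by
  refine le_antisymm (sup_le le_sup_right (le_sup_right.trans hI.ge)) ?_
  rcases h₂.inf_eq_or_le (hEY.trans le_sup_right : E ≤ X ⊔ Y) with hD | hD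
  · rcases h₁.inf_eq_or_le (hBX.trans le_sup_left : B ≤ X ⊔ Y) with hA | hA
    · rw [sup_comm] at hA
      exact absurd (le_antisymm (le_of_sup_inf_eq (le_sup_right.trans hI.le) hD hEY)
        (le_of_sup_inf_eq (le_sup_right.trans hI.ge) hA hBX)) hXY
    · exact sup_le hA le_sup_left
  · exact hI.le.trans (sup_le hD le_sup_right)

end

theorem stmt9_general {K L : Type*} [Field K] [LieRing L] [LieAlgebra K L]
    (A B D E : LieIdeal K L)
    (hchief₁ : IsChiefFactor A B) (hchief₂ : IsChiefFactor D E)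
    (hnonab₁ : ∃ a ∈ A, ∃ b ∈ A, ⁅a, b⁆ ∉ B)
    (hnonab₂ : ∃ a ∈ D, ∃ b ∈ D, ⁅a, b⁆ ∉ E)
    (hequiv : LEquivFactors K (A : Set L) (B : Set L) (D : Set L) (E : Set L))
    (hniso : ¬ LIsoFactors K (A : Set L) (B : Set L) (D : Set L) (E : Set L)) :
    {x : L | ∀ a ∈ A, ⁅x, a⁆ ∈ B} ≠ {x : L | ∀ d ∈ D, ⁅x, d⁆ ∈ E} ∧
      -- `I_L(A/B) = I_L(D/E)`
      {x : L | ∃ a ∈ A, ∀ c ∈ A, ⁅x, c⁆ - ⁅a, c⁆ ∈ B} =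
        {x : L | ∃ d ∈ D, ∀ c ∈ D, ⁅x, c⁆ - ⁅d, c⁆ ∈ E} ∧
      -- `I = X + Y`
      {x : L | ∃ a ∈ A, ∀ c ∈ A, ⁅x, c⁆ - ⁅a, c⁆ ∈ B} =
        {x : L | ∃ u ∈ {z : L | ∀ a ∈ A, ⁅z, a⁆ ∈ B},
          ∃ v ∈ {z : L | ∀ d ∈ D, ⁅z, d⁆ ∈ E}, x = u + v} ∧
      -- `X/(X ∩ Y) ≅_L D/E`
      LIsoFactors K {z : L | ∀ a ∈ A, ⁅z, a⁆ ∈ B}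
        ({z : L | ∀ a ∈ A, ⁅z, a⁆ ∈ B} ∩ {z : L | ∀ d ∈ D, ⁅z, d⁆ ∈ E})
        (D : Set L) (E : Set L) ∧
      -- `Y/(X ∩ Y) ≅_L A/B`
      LIsoFactors K {z : L | ∀ d ∈ D, ⁅z, d⁆ ∈ E}
        ({z : L | ∀ a ∈ A, ⁅z, a⁆ ∈ B} ∩ {z : L | ∀ d ∈ D, ⁅z, d⁆ ∈ E})
        (A : Set L) (B : Set L) := by
  set X := factorCentralizer A B
  set Y := factorCentralizer D E
  have hAX : A ⊓ X = B := inf_factorCentralizer_eq hchief₁ hnonab₁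
  have hDY : D ⊓ Y = E := inf_factorCentralizer_eq hchief₂ hnonab₂
  have hI : A ⊔ X = D ⊔ Y := sup_factorCentralizer_eq_of_lEquivFactors hequiv
  have hXY : X ≠ Y := fun hXY => hniso <| by
    have hAD := lIsoFactors_of_sup_eq (S := A) (Q := X) (P := D) (by rw [hI, hXY])
    rwa [hAX, hXY, hDY] at hAD
  have hXYI : X ⊔ Y = A ⊔ X := sup_eq_of_isChiefFactor hchief₁ hchief₂
    (le_factorCentralizer A B) (le_factorCentralizer D E) hI hXY
  refine ⟨fun h => hXY (SetLike.coe_injective h), ?_, ?_, ?_, ?_⟩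
  · rw [← coe_sup_factorCentralizer, ← coe_sup_factorCentralizer, hI]
  · rw [← coe_sup_factorCentralizer, ← hXYI]
    exact coe_sup_eq_setOf_add X Y
  · have hXD := lIsoFactors_of_sup_eq (S := X) (Q := Y) (P := D) (hXYI.trans hI)
    rwa [hDY] at hXD
  · have hYA := lIsoFactors_of_sup_eq (S := Y) (Q := X) (P := A) (by rw [sup_comm, hXYI])
    rwa [hAX, inf_comm] at hYA

/-- Let `A/B` and `D/E` be nonabelian chief factors of `L` that are
`L`-equivalent but not `L`-isomorphic, and set `X = C_L(A/B)`, `Y = C_L(D/E)`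
and `I = I_L(A/B) = I_L(D/E)`.  Then `X ≠ Y`, `I = X + Y`,
`X/(X ∩ Y) ≅_L D/E` and `Y/(X ∩ Y) ≅_L A/B`. -/
theorem stmt9 {K L : Type*} [Field K] [LieRing L] [LieAlgebra K L]
    [FiniteDimensional K L]
    (A B D E : LieIdeal K L) (hBA : B ≤ A) (hED : E ≤ D)
    (hchief₁ : IsChiefFactor A B) (hchief₂ : IsChiefFactor D E)
    (hnonab₁ : ∃ a ∈ A, ∃ b ∈ A, ⁅a, b⁆ ∉ B)
    (hnonab₂ : ∃ a ∈ D, ∃ b ∈ D, ⁅a, b⁆ ∉ E)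
    (hequiv : LEquivFactors K (A : Set L) (B : Set L) (D : Set L) (E : Set L))
    (hniso : ¬ LIsoFactors K (A : Set L) (B : Set L) (D : Set L) (E : Set L)) :
    {x : L | ∀ a ∈ A, ⁅x, a⁆ ∈ B} ≠ {x : L | ∀ d ∈ D, ⁅x, d⁆ ∈ E} ∧
      -- `I_L(A/B) = I_L(D/E)`
      {x : L | ∃ a ∈ A, ∀ c ∈ A, ⁅x, c⁆ - ⁅a, c⁆ ∈ B} =
        {x : L | ∃ d ∈ D, ∀ c ∈ D, ⁅x, c⁆ - ⁅d, c⁆ ∈ E} ∧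
      -- `I = X + Y`
      {x : L | ∃ a ∈ A, ∀ c ∈ A, ⁅x, c⁆ - ⁅a, c⁆ ∈ B} =
        {x : L | ∃ u ∈ {z : L | ∀ a ∈ A, ⁅z, a⁆ ∈ B},
          ∃ v ∈ {z : L | ∀ d ∈ D, ⁅z, d⁆ ∈ E}, x = u + v} ∧
      -- `X/(X ∩ Y) ≅_L D/E`
      LIsoFactors K {z : L | ∀ a ∈ A, ⁅z, a⁆ ∈ B}
        ({z : L | ∀ a ∈ A, ⁅z, a⁆ ∈ B} ∩ {z : L | ∀ d ∈ D, ⁅z, d⁆ ∈ E})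
        (D : Set L) (E : Set L) ∧
      -- `Y/(X ∩ Y) ≅_L A/B`
      LIsoFactors K {z : L | ∀ d ∈ D, ⁅z, d⁆ ∈ E}
        ({z : L | ∀ a ∈ A, ⁅z, a⁆ ∈ B} ∩ {z : L | ∀ d ∈ D, ⁅z, d⁆ ∈ E})
        (A : Set L) (B : Set L) :=
  stmt9_general A B D E hchief₁ hchief₂ hnonab₁ hnonab₂ hequiv hniso
end

section
/- Let L be a finite-dimensional Lie algebra with two distinct minimal ideals X and Y such that X ∩ Y = 0, C_L(X) = Y, C_L(Y) = X, and X and Y are L-equivalent via a 1-cocycle α ∈ Z¹(L,X) and an L-isomorphism φ : Y → X_α. Then U = ker(α) is a subalgebra of L satisfying L = X ∔ U = Y ∔ U (vector space direct sums), and U is a core-free maximal subalgebra; hence L is primitive of type 3. -/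
/-!
On `X` the cocycle is `-id`: for `a ∈ X` and `b ∈ Y`, equivariance of `φ` gives
`⁅α a + a, φ b⁆ = φ ⁅a, b⁆ = 0`, so `α a + a` centralises `X` and lies in `X ∩ Y = 0`.
Thus `-α` is a projection onto `X` and `L = X ∔ ker α`. The ideal `Y ∩ ker α` of the minimal
ideal `Y` cannot be all of `Y`, since then `⁅φ c, φ c'⁆ = φ ⁅c, c'⁆ = ⁅c, φ c'⁆ = 0` would make
`X` abelian; so it is zero, and `dim Y = dim X` gives `L = Y ∔ ker α`. A subalgebra `S ⊇ ker α`
meets `X` in an ideal, because `L = Y + ker α` and `Y` centralises `X`; minimality of `X` then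
forces `S = ker α` or `S = L`.
-/

open Module

theorem isAtom_iff_forall_le {α : Type*} [PartialOrder α] [OrderBot α] {a : α} :
    IsAtom a ↔ a ≠ ⊥ ∧ ∀ b ≤ a, b = ⊥ ∨ b = a :=
  ⟨fun h => ⟨h.1, fun _ hb => h.le_iff.mp hb⟩,
    fun h => ⟨h.1, fun b hb => (h.2 b hb.le).resolve_right hb.ne⟩⟩

namespace Submodule

variable {R M : Type*} [Ring R] [AddCommGroup M] [Module R M]

lemma exists_add_eq_and_eq_zero_of_isCompl {P Q : Submodule R M} (h : IsCompl P Q) :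
    (∀ z, ∃ a ∈ P, ∃ u ∈ Q, z = a + u) ∧ ∀ z, z ∈ P → z ∈ Q → z = 0 := by
  refine ⟨fun z => ?_, disjoint_def.mp h.1⟩
  obtain ⟨a, u, ha, hu, rfl⟩ := codisjoint_iff_exists_add_eq.mp h.2 z
  exact ⟨a, ha, u, hu, rfl⟩

lemma finrank_eq_of_bijOn {N : Type*} [AddCommGroup N] [Module R N] {P : Submodule R M}
    {Q : Submodule R N} (f : M → N) (hmaps : ∀ b ∈ P, f b ∈ Q)
    (hadd : ∀ b ∈ P, ∀ b' ∈ P, f (b + b') = f b + f b')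
    (hsmul : ∀ (k : R), ∀ b ∈ P, f (k • b) = k • f b)
    (hinj : ∀ b ∈ P, f b = 0 → b = 0) (hsurj : ∀ a ∈ Q, ∃ b ∈ P, f b = a) :
    finrank R P = finrank R Q := by
  let g : P →ₗ[R] Q :=
    { toFun := fun b => ⟨f b, hmaps b b.2⟩
      map_add' := fun b b' => Subtype.ext (hadd b b.2 b' b'.2)
      map_smul' := fun k b => Subtype.ext (hsmul k b b.2) }
  have hg_inj : Function.Injective g := by
    rw [← LinearMap.ker_eq_bot, LinearMap.ker_eq_bot']
    exact fun b hb => Subtype.ext (hinj b b.2 (congrArg Subtype.val hb))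
  have hg_surj : Function.Surjective g := fun a => by
    obtain ⟨b, hb, hfb⟩ := hsurj a a.2
    exact ⟨⟨b, hb⟩, Subtype.ext hfb⟩
  exact (LinearEquiv.ofBijective g ⟨hg_inj, hg_surj⟩).finrank_eq

lemma isCompl_of_disjoint_of_finrank_eq {K V : Type*} [Field K] [AddCommGroup V] [Module K V]
    [FiniteDimensional K V] {P P' U : Submodule K V} (hPU : IsCompl P U) (hP'U : Disjoint P' U)
    (h : finrank K P' = finrank K P) : IsCompl P' U :=
  (isCompl_iff_disjoint P' U (by rw [h, finrank_add_eq_of_isCompl hPU])).mpr hP'U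

end Submodule

namespace LieIdeal

variable {R L : Type*} [CommRing R] [LieRing L] [LieAlgebra R L]

lemma lie_eq_zero_of_disjoint {I J : LieIdeal R L} (h : Disjoint I J) {a b : L} (ha : a ∈ I)
    (hb : b ∈ J) : ⁅a, b⁆ = 0 := by
  simpa [h.eq_bot] using LieSubmodule.lie_le_inf I J (LieSubmodule.lie_mem_lie ha hb)

lemma eq_zero_of_disjoint {I J : LieIdeal R L} (h : Disjoint I J) {z : L} (hI : z ∈ I)
    (hJ : z ∈ J) : z = 0 :=
  Submodule.disjoint_def.mp (LieSubmodule.disjoint_toSubmodule.mpr h) z hI hJ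

lemma submodule_eq_bot_or_eq_of_isAtom {X : LieIdeal R L} (hX : IsAtom X) {M : Submodule R L}
    (hMX : M ≤ X.toSubmodule) (hM : ∀ (x : L), ∀ m ∈ M, ⁅x, m⁆ ∈ M) :
    M = ⊥ ∨ M = X.toSubmodule := by
  let J : LieIdeal R L := { M with lie_mem := hM _ _ }
  rcases hX.le_iff.mp (show J ≤ X from hMX) with h | h
  · exact Or.inl (congrArg LieSubmodule.toSubmodule h)
  · exact Or.inr (congrArg LieSubmodule.toSubmodule h)

variable {X Y : LieIdeal R L} (hC : ∀ z : L, (∀ a ∈ X, ⁅z, a⁆ = 0) → z ∈ Y)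
include hC

lemma le_of_disjoint {J : LieIdeal R L} (hJ : Disjoint J X) : J ≤ Y :=
  fun _ hj => hC _ fun _ ha => lie_eq_zero_of_disjoint hJ hj ha

lemma exists_lie_ne_zero (hX : X ≠ ⊥) (hXY : Disjoint X Y) : ∃ a ∈ X, ∃ b ∈ X, ⁅a, b⁆ ≠ 0 := by
  by_contra! h
  have hXle : X ≤ Y := fun a ha => hC a (h a ha)
  exact hX (hXY.eq_bot_of_le hXle)

lemma eq_or_eq_of_isAtom (hX : IsAtom X) (hY : IsAtom Y) {J : LieIdeal R L} (hJ : IsAtom J) :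
    J = X ∨ J = Y := by
  by_cases hXJ : X ≤ J
  · exact Or.inl ((hJ.le_iff.mp hXJ).resolve_left hX.1).symm
  · have hJY : J ≤ Y := le_of_disjoint hC (hX.not_le_iff_disjoint.mp hXJ).symm
    exact Or.inr ((hY.le_iff.mp hJY).resolve_left hJ.1)

end LieIdeal

namespace LieSubalgebra

variable {R L : Type*} [CommRing R] [LieRing L] [LieAlgebra R L] {X Y : LieIdeal R L}
  {U : LieSubalgebra R L}

lemma ideal_eq_bot_of_coe_subset (hC : ∀ z : L, (∀ a ∈ X, ⁅z, a⁆ = 0) → z ∈ Y) (hX : IsAtom X)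
    (hXU : Disjoint X.toSubmodule U.toSubmodule) (hYU : Disjoint Y.toSubmodule U.toSubmodule)
    {C : LieIdeal R L} (hCU : (C : Set L) ⊆ U) : C = ⊥ := by
  by_cases hXC : X ≤ C
  · have hXU' : X.toSubmodule ≤ U.toSubmodule := fun a ha => hCU (hXC ha)
    exact absurd ((LieSubmodule.toSubmodule_eq_bot _).mp (hXU.eq_bot_of_le hXU')) hX.1
  · have hCY : C ≤ Y := LieIdeal.le_of_disjoint hC (hX.not_le_iff_disjoint.mp hXC).symm
    exact (LieSubmodule.toSubmodule_eq_bot _).mp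
      ((hYU.mono_left (show C.toSubmodule ≤ Y.toSubmodule from hCY)).eq_bot_of_le
        fun _ hc => hCU hc)

lemma isCoatom_of_isCompl (hX : IsAtom X) (hXY : Disjoint X Y)
    (hXU : IsCompl X.toSubmodule U.toSubmodule) (hYU : Codisjoint Y.toSubmodule U.toSubmodule) :
    IsCoatom U := by
  refine ⟨fun hU => hX.1 ?_, fun S hUS => ?_⟩
  · subst hU
    exact (LieSubmodule.toSubmodule_eq_bot _).mp (hXU.1.eq_bot_of_le le_top)
  have hM : ∀ (x : L), ∀ m ∈ X.toSubmodule ⊓ S.toSubmodule,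
      ⁅x, m⁆ ∈ X.toSubmodule ⊓ S.toSubmodule := by
    rintro x m ⟨hmX, hmS⟩
    obtain ⟨b, u, hb, hu, rfl⟩ := Submodule.codisjoint_iff_exists_add_eq.mp hYU x
    rw [add_lie, LieIdeal.lie_eq_zero_of_disjoint hXY.symm hb hmX, zero_add]
    exact ⟨X.lie_mem hmX, S.lie_mem (hUS.le hu) hmS⟩
  have hmod : (U.toSubmodule ⊔ X.toSubmodule) ⊓ S.toSubmodule =
      U.toSubmodule ⊔ X.toSubmodule ⊓ S.toSubmodule :=
    sup_inf_assoc_of_le _ hUS.le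
  rcases LieIdeal.submodule_eq_bot_or_eq_of_isAtom hX inf_le_left hM with h | h
  · rw [h, sup_bot_eq, hXU.symm.sup_eq_top, top_inf_eq] at hmod
    exact absurd (toSubmodule_injective hmod) hUS.ne'
  · rw [h, hXU.symm.sup_eq_top, top_inf_eq] at hmod
    exact (toSubmodule_eq_top S).mp hmod

end LieSubalgebra

section Cocycle

variable {R L : Type*} [CommRing R] [LieRing L] [LieAlgebra R L]

def cocycleKer (α : L →ₗ[R] L)
    (hα : ∀ x y : L, α ⁅x, y⁆ = ⁅x, α y⁆ - ⁅y, α x⁆ + ⁅α x, α y⁆) : LieSubalgebra R L :=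
  { LinearMap.ker α with
    lie_mem' := fun {x y} hx hy => by
      change α x = 0 at hx
      change α y = 0 at hy
      change α ⁅x, y⁆ = 0
      simp [hα, hx, hy] }

variable {α : L →ₗ[R] L} {X Y : LieIdeal R L} (hαX : ∀ x, α x ∈ X) {φ : L → L}
  (hφsurj : ∀ a ∈ X, ∃ b ∈ Y, φ b = a)
  (hφequiv : ∀ (x : L), ∀ b ∈ Y, φ ⁅x, b⁆ = ⁅α x, φ b⁆ + ⁅x, φ b⁆)
include hαX hφsurj hφequiv

lemma cocycle_eq_neg_of_mem (hXY : Disjoint X Y) (hC : ∀ z : L, (∀ a ∈ X, ⁅z, a⁆ = 0) → z ∈ Y)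
    {a : L} (ha : a ∈ X) : α a = -a := by
  have hφ0 : φ 0 = 0 := by simpa using hφequiv 0 0 Y.zero_mem
  have hY : α a + a ∈ Y := hC _ fun c hc => by
    obtain ⟨b, hb, rfl⟩ := hφsurj c hc
    rw [add_lie, ← hφequiv a b hb, LieIdeal.lie_eq_zero_of_disjoint hXY ha hb, hφ0]
  exact eq_neg_of_add_eq_zero_left
    (LieIdeal.eq_zero_of_disjoint hXY (X.add_mem (hαX a) ha) hY)

lemma isCompl_ker_cocycle (hXY : Disjoint X Y) (hC : ∀ z : L, (∀ a ∈ X, ⁅z, a⁆ = 0) → z ∈ Y) :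
    IsCompl X.toSubmodule (LinearMap.ker α) := by
  let p : L →ₗ[R] X.toSubmodule := (-α).codRestrict X.toSubmodule fun x => X.neg_mem (hαX x)
  have hp : LinearMap.ker p = LinearMap.ker α := by
    ext x; simp [p, LinearMap.ker_codRestrict]
  rw [← hp]
  refine LinearMap.isCompl_of_proj fun a => Subtype.ext ?_
  simp [p, cocycle_eq_neg_of_mem hαX hφsurj hφequiv hXY hC a.2]

lemma disjoint_ker_cocycle (hα : ∀ x y : L, α ⁅x, y⁆ = ⁅x, α y⁆ - ⁅y, α x⁆ + ⁅α x, α y⁆)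
    (hY : IsAtom Y) (hXY : Disjoint X Y) (hXnonab : ∃ a ∈ X, ∃ b ∈ X, ⁅a, b⁆ ≠ 0)
    (hφbr : ∀ b ∈ Y, ∀ b' ∈ Y, φ ⁅b, b'⁆ = ⁅φ b, φ b'⁆) :
    Disjoint Y.toSubmodule (LinearMap.ker α) := by
  have hM : ∀ (x : L), ∀ m ∈ Y.toSubmodule ⊓ LinearMap.ker α,
      ⁅x, m⁆ ∈ Y.toSubmodule ⊓ LinearMap.ker α := by
    intro x m hm
    obtain ⟨hmY, hm⟩ := Submodule.mem_inf.mp hm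
    rw [LinearMap.mem_ker] at hm
    refine ⟨Y.lie_mem hmY, show α ⁅x, m⁆ = 0 from ?_⟩
    rw [hα, hm, LieIdeal.lie_eq_zero_of_disjoint hXY.symm hmY (hαX x)]
    simp
  refine disjoint_iff.mpr
    ((LieIdeal.submodule_eq_bot_or_eq_of_isAtom hY inf_le_left hM).resolve_right fun h => ?_)
  have hαY : ∀ c ∈ Y, α c = 0 := fun c hc => (h.ge hc).2
  obtain ⟨a, ha, a', ha', hne⟩ := hXnonab
  obtain ⟨c, hc, rfl⟩ := hφsurj a ha
  obtain ⟨c', hc', rfl⟩ := hφsurj a' ha'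
  apply hne
  rw [← hφbr c hc c' hc', hφequiv c c' hc', hαY c hc, zero_lie, zero_add,
    LieIdeal.lie_eq_zero_of_disjoint hXY.symm hc ha']

end Cocycle

theorem stmt10_general {K L : Type*} [Field K] [LieRing L] [LieAlgebra K L]
    [FiniteDimensional K L]
    (X Y : LieIdeal K L)
    (hXmin : X ≠ ⊥ ∧ ∀ C : LieIdeal K L, C ≤ X → C = ⊥ ∨ C = X)
    (hYmin : Y ≠ ⊥ ∧ ∀ C : LieIdeal K L, C ≤ Y → C = ⊥ ∨ C = Y)
    (hinter : X ⊓ Y = ⊥)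
    (hCX : {x : L | ∀ a ∈ X, ⁅x, a⁆ = 0} = (Y : Set L))
    (hCY : {x : L | ∀ b ∈ Y, ⁅x, b⁆ = 0} = (X : Set L))
    (α : L →ₗ[K] L) (hαX : ∀ x : L, α x ∈ X)
    (hαcoc : ∀ x y : L, α ⁅x, y⁆ = ⁅x, α y⁆ - ⁅y, α x⁆ + ⁅α x, α y⁆)
    (φ : L → L) (hφX : ∀ b ∈ Y, φ b ∈ X)
    (hφadd : ∀ b ∈ Y, ∀ b' ∈ Y, φ (b + b') = φ b + φ b')
    (hφsmul : ∀ (k : K), ∀ b ∈ Y, φ (k • b) = k • φ b)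
    (hφbr : ∀ b ∈ Y, ∀ b' ∈ Y, φ ⁅b, b'⁆ = ⁅φ b, φ b'⁆)
    (hφinj : ∀ b ∈ Y, φ b = 0 → b = 0)
    (hφsurj : ∀ a ∈ X, ∃ b ∈ Y, φ b = a)
    (hφequiv : ∀ (x : L), ∀ b ∈ Y, φ ⁅x, b⁆ = ⁅α x, φ b⁆ + ⁅x, φ b⁆) :
    ∃ U : LieSubalgebra K L, (U : Set L) = {x : L | α x = 0} ∧
      -- `L = X ∔ U`
      (∀ z : L, ∃ a ∈ X, ∃ u ∈ U, z = a + u) ∧ (∀ z : L, z ∈ X → z ∈ U → z = 0) ∧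
      -- `L = Y ∔ U`
      (∀ z : L, ∃ b ∈ Y, ∃ u ∈ U, z = b + u) ∧ (∀ z : L, z ∈ Y → z ∈ U → z = 0) ∧
      -- `U` is core-free
      (∀ C : LieIdeal K L, (C : Set L) ⊆ (U : Set L) → C = ⊥) ∧
      -- `U` is maximal
      (U ≠ ⊤ ∧ ∀ S : LieSubalgebra K L, U ≤ S → S = U ∨ S = ⊤) ∧
      -- `L` is primitive of type 3: `X` and `Y` are its only minimal ideals and
      -- both are nonabelian
      (∀ J : LieIdeal K L, J ≠ ⊥ → (∀ C : LieIdeal K L, C ≤ J → C = ⊥ ∨ C = J) →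
        J = X ∨ J = Y) ∧
      (∃ a ∈ X, ∃ b ∈ X, ⁅a, b⁆ ≠ 0) ∧ (∃ a ∈ Y, ∃ b ∈ Y, ⁅a, b⁆ ≠ 0) := by
  have hX : IsAtom X := isAtom_iff_forall_le.mpr hXmin
  have hY : IsAtom Y := isAtom_iff_forall_le.mpr hYmin
  have hXY : Disjoint X Y := disjoint_iff.mpr hinter
  have hCX' : ∀ z : L, (∀ a ∈ X, ⁅z, a⁆ = 0) → z ∈ Y := fun _ hz => hCX.subset hz
  have hCY' : ∀ z : L, (∀ b ∈ Y, ⁅z, b⁆ = 0) → z ∈ X := fun _ hz => hCY.subset hz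
  have hXnonab := LieIdeal.exists_lie_ne_zero hCX' hX.1 hXY
  let U := cocycleKer α hαcoc
  have hXU : IsCompl X.toSubmodule U.toSubmodule :=
    isCompl_ker_cocycle hαX hφsurj hφequiv hXY hCX'
  have hYU : IsCompl Y.toSubmodule U.toSubmodule :=
    Submodule.isCompl_of_disjoint_of_finrank_eq hXU
      (disjoint_ker_cocycle hαX hφsurj hφequiv hαcoc hY hXY hXnonab hφbr)
      (Submodule.finrank_eq_of_bijOn φ hφX hφadd hφsmul hφinj hφsurj)
  obtain ⟨hXdec, hXU0⟩ := Submodule.exists_add_eq_and_eq_zero_of_isCompl hXU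
  obtain ⟨hYdec, hYU0⟩ := Submodule.exists_add_eq_and_eq_zero_of_isCompl hYU
  have hUmax : IsCoatom U := LieSubalgebra.isCoatom_of_isCompl hX hXY hXU hYU.2
  refine ⟨U, rfl, hXdec, hXU0, hYdec, hYU0,
    fun C hC => LieSubalgebra.ideal_eq_bot_of_coe_subset hCX' hX hXU.1 hYU.1 hC,
    ⟨hUmax.1, fun S hS => (eq_or_lt_of_le hS).imp Eq.symm (hUmax.2 S)⟩,
    fun J hJ hJmin => LieIdeal.eq_or_eq_of_isAtom hCX' hX hY (isAtom_iff_forall_le.mpr ⟨hJ, hJmin⟩),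
    hXnonab, LieIdeal.exists_lie_ne_zero hCY' hY.1 hXY.symm⟩

/-- Let `L` be a finite-dimensional Lie algebra with two distinct minimal
ideals `X` and `Y` such that `X ∩ Y = 0`, `C_L(X) = Y`, `C_L(Y) = X`, and `X`
and `Y` are `L`-equivalent via a 1-cocycle `α ∈ Z¹(L,X)` and an
`L`-isomorphism `φ : Y → X_α`.  Then `U = ker α` is a subalgebra of `L` with
`L = X ∔ U = Y ∔ U`, and `U` is a core-free maximal subalgebra; hence `L` is
primitive of type 3. -/
theorem stmt10 {K L : Type*} [Field K] [LieRing L] [LieAlgebra K L]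
    [FiniteDimensional K L]
    (X Y : LieIdeal K L) (hXY : X ≠ Y)
    (hXmin : X ≠ ⊥ ∧ ∀ C : LieIdeal K L, C ≤ X → C = ⊥ ∨ C = X)
    (hYmin : Y ≠ ⊥ ∧ ∀ C : LieIdeal K L, C ≤ Y → C = ⊥ ∨ C = Y)
    (hinter : X ⊓ Y = ⊥)
    (hCX : {x : L | ∀ a ∈ X, ⁅x, a⁆ = 0} = (Y : Set L))
    (hCY : {x : L | ∀ b ∈ Y, ⁅x, b⁆ = 0} = (X : Set L))
    (α : L →ₗ[K] L) (hαX : ∀ x : L, α x ∈ X)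
    (hαcoc : ∀ x y : L, α ⁅x, y⁆ = ⁅x, α y⁆ - ⁅y, α x⁆ + ⁅α x, α y⁆)
    (φ : L → L) (hφX : ∀ b ∈ Y, φ b ∈ X)
    (hφadd : ∀ b ∈ Y, ∀ b' ∈ Y, φ (b + b') = φ b + φ b')
    (hφsmul : ∀ (k : K), ∀ b ∈ Y, φ (k • b) = k • φ b)
    (hφbr : ∀ b ∈ Y, ∀ b' ∈ Y, φ ⁅b, b'⁆ = ⁅φ b, φ b'⁆)
    (hφinj : ∀ b ∈ Y, φ b = 0 → b = 0)
    (hφsurj : ∀ a ∈ X, ∃ b ∈ Y, φ b = a)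
    (hφequiv : ∀ (x : L), ∀ b ∈ Y, φ ⁅x, b⁆ = ⁅α x, φ b⁆ + ⁅x, φ b⁆) :
    ∃ U : LieSubalgebra K L, (U : Set L) = {x : L | α x = 0} ∧
      -- `L = X ∔ U`
      (∀ z : L, ∃ a ∈ X, ∃ u ∈ U, z = a + u) ∧ (∀ z : L, z ∈ X → z ∈ U → z = 0) ∧
      -- `L = Y ∔ U`
      (∀ z : L, ∃ b ∈ Y, ∃ u ∈ U, z = b + u) ∧ (∀ z : L, z ∈ Y → z ∈ U → z = 0) ∧
      -- `U` is core-free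
      (∀ C : LieIdeal K L, (C : Set L) ⊆ (U : Set L) → C = ⊥) ∧
      -- `U` is maximal
      (U ≠ ⊤ ∧ ∀ S : LieSubalgebra K L, U ≤ S → S = U ∨ S = ⊤) ∧
      -- `L` is primitive of type 3: `X` and `Y` are its only minimal ideals and
      -- both are nonabelian
      (∀ J : LieIdeal K L, J ≠ ⊥ → (∀ C : LieIdeal K L, C ≤ J → C = ⊥ ∨ C = J) →
        J = X ∨ J = Y) ∧
      (∃ a ∈ X, ∃ b ∈ X, ⁅a, b⁆ ≠ 0) ∧ (∃ a ∈ Y, ∃ b ∈ Y, ⁅a, b⁆ ≠ 0) :=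
  stmt10_general X Y hXmin hYmin hinter hCX hCY α hαX hαcoc φ hφX hφadd hφsmul hφbr hφinj hφsurj
    hφequiv
end

section
/- Let A be an abelian irreducible L-module over a finite-dimensional Lie algebra L, let I = C_L(A), and suppose α ∈ Z¹(L,A) satisfies α(I) = A. Then L = I + ker(α), ker(α) is a subalgebra of L, and I ∩ ker(α) is an ideal of L with I/(I ∩ ker(α)) ≅_L A; in particular the chief factor I/(I ∩ ker α) is complemented by ker(α). -/
/-- Let `A` be an abelian irreducible `L`-module over a finite-dimensional Lie
algebra `L`, `I = C_L(A)`, and let `α ∈ Z¹(L,A)` satisfy `α(I) = A`.  Then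
`L = I + ker α`, `ker α` is a subalgebra of `L`, `I ∩ ker α` is an ideal of
`L`, and `I/(I ∩ ker α) ≅_L A` (via `α`); in particular the chief factor
`I/(I ∩ ker α)` is complemented by `ker α`. -/
theorem stmt13 {K L A : Type*} [Field K] [LieRing L] [LieAlgebra K L]
    [FiniteDimensional K L]
    [AddCommGroup A] [Module K A] [LieRingModule L A] [LieModule K L A]
    [LieModule.IsIrreducible K L A]
    (α : L →ₗ[K] A)
    (hα : ∀ x y : L, α ⁅x, y⁆ = ⁅x, α y⁆ - ⁅y, α x⁆)
    (hsurj : α '' {z : L | ∀ a : A, ⁅z, a⁆ = 0} = Set.univ) :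
    -- `L = I + ker α`
    (∀ z : L, ∃ x ∈ {z : L | ∀ a : A, ⁅z, a⁆ = 0}, ∃ u : L, α u = 0 ∧ z = x + u) ∧
      -- `ker α` is a subalgebra of `L`
      (∃ U : LieSubalgebra K L, (U : Set L) = {x : L | α x = 0}) ∧
      -- `I ∩ ker α` is an ideal of `L`
      (∃ J : LieIdeal K L,
        (J : Set L) = {x : L | (∀ a : A, ⁅x, a⁆ = 0) ∧ α x = 0}) ∧
      -- `I/(I ∩ ker α) ≅_L A` via the `L`-equivariant map `α|_I`
      (∀ x ∈ {z : L | ∀ a : A, ⁅z, a⁆ = 0}, ∀ y : L, α ⁅y, x⁆ = ⁅y, α x⁆) := by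
  refine ⟨?_, ?_, ?_, ?_⟩
  · intro z
    have h : α z ∈ α '' {z : L | ∀ a : A, ⁅z, a⁆ = 0} := by
      rw [hsurj]; trivial
    obtain ⟨x, hx, hxz⟩ := h
    exact ⟨x, hx, z - x, by simp [hxz], by abel⟩
  · refine ⟨{ LinearMap.ker α with lie_mem' := ?_ }, ?_⟩
    · intro x y hx hy
      replace hx : α x = 0 := hx
      replace hy : α y = 0 := hy
      show α ⁅x, y⁆ = 0
      rw [hα x y, hx, hy]
      simp
    · ext x
      simp only [SetLike.mem_coe, Set.mem_setOf_eq]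
      exact Iff.rfl
  · refine ⟨{ carrier := {x : L | (∀ a : A, ⁅x, a⁆ = 0) ∧ α x = 0}
              add_mem' := ?_
              zero_mem' := ?_
              smul_mem' := ?_
              lie_mem := ?_ }, rfl⟩
    · rintro x y ⟨hx1, hx2⟩ ⟨hy1, hy2⟩
      refine ⟨fun a => by rw [add_lie, hx1, hy1, add_zero], by simp [hx2, hy2]⟩
    · exact ⟨fun a => zero_lie a, by simp⟩
    · rintro c x ⟨hx1, hx2⟩
      refine ⟨fun a => by rw [smul_lie, hx1, smul_zero], by simp [hx2]⟩
    · rintro y x ⟨hx1, hx2⟩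
      refine ⟨fun a => ?_, ?_⟩
      · rw [lie_lie, hx1, hx1, lie_zero, sub_zero]
      · rw [hα y x, hx2, hx1, lie_zero, sub_zero]
  · intro x hx y
    rw [hα y x, hx (α y), sub_zero]
end

section
/- For an abelian irreducible L-module A over a finite-dimensional Lie algebra L, E_L(A) = D_L(A), where E_L(A) = {x ∈ L : α(x) = 0 for all α ∈ Z¹(L,A)} and D_L(A) is the intersection of all ideals R of L contained in I = C_L(A) such that I/R ≅_L A and I/R is a non-Frattini chief factor of L. -/
/-- `I/R` is non-Frattini: some maximal subalgebra `M` of `L` containing `R`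
(equivalently, a maximal subalgebra of `L/R`) does not contain `I`. -/
def NonFrattini {K L : Type*} [Field K] [LieRing L] [LieAlgebra K L]
    (I : Set L) (R : LieIdeal K L) : Prop :=
  ∃ M : LieSubalgebra K L, (R : Set L) ⊆ (M : Set L) ∧ M ≠ ⊤ ∧
    (∀ S : LieSubalgebra K L, M ≤ S → S = M ∨ S = ⊤) ∧ ¬ I ⊆ (M : Set L)

/-!
A 1-cocycle `α` is `L`-equivariant on the centralizer `I = C_L(A)`. If `α` does not vanish
on `I`, irreducibility of `A` makes `α` map `I` onto `A`, so `R = I ∩ ker α` gives `I/R ≅ A`;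
the subalgebra `ker α` supplements `I`, so a maximal subalgebra containing it witnesses that
`I/R` is non-Frattini, and `D_L(A) ⊆ E_L(A)` follows. Conversely, for such `R`, `ψ : I/R ≅ A`
and a maximal subalgebra `M ⊉ I` we have `L = M + I`, and `ψ(M ∩ I)` is a proper submodule of
`A`, hence zero. So `0` on `M` and `ψ` on `I` glue to a 1-cocycle, which gives
`E_L(A) ∩ I ⊆ R`; the inner derivations `x ↦ x • a` give `E_L(A) ⊆ I`.
-/

section LinearAlgebra

variable {R V W : Type*} [Ring R] [AddCommGroup V] [Module R V] [AddCommGroup W] [Module R W]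

theorem LinearMap.exists_extend_by_zero_of_sup_eq_top {p q : Submodule R V} (hpq : p ⊔ q = ⊤)
    (f : V →ₗ[R] W) (hf : ∀ x ∈ p ⊓ q, f x = 0) :
    ∃ g : V →ₗ[R] W, (∀ x ∈ p, g x = 0) ∧ ∀ x ∈ q, g x = f x := by
  let F : V →ₗ.[R] W := LinearPMap.sup ⟨p, 0⟩ ⟨q, f.domRestrict q⟩
    fun x y hxy => (hf y ⟨hxy ▸ x.2, y.2⟩).symm
  have hF : F.domain = ⊤ := hpq
  refine ⟨F.toFun ∘ₗ (LinearEquiv.ofTop _ hF).symm.toLinearMap, fun x hx => ?_,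
    fun x hx => ?_⟩
  · exact ((LinearPMap.left_le_sup _ _ _).2 (x := ⟨x, hx⟩) rfl).symm
  · exact ((LinearPMap.right_le_sup _ _ _).2 (x := ⟨x, hx⟩) rfl).symm

end LinearAlgebra

section Cocycle

variable {R L A : Type*} [CommRing R] [LieRing L] [LieAlgebra R L]
  [AddCommGroup A] [Module R A] [LieRingModule L A] [LieModule R L A]

def IsOneCocycle (α : L →ₗ[R] A) : Prop :=
  ∀ y z : L, α ⁅y, z⁆ = ⁅y, α z⁆ - ⁅z, α y⁆

theorem isOneCocycle_toEnd_flip (a : A) :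
    IsOneCocycle ((LieModule.toEnd R L A : L →ₗ[R] Module.End R A).flip a) := by
  intro y z
  simp

theorem mem_ker_of_forall_isOneCocycle {x : L}
    (hx : ∀ α : L →ₗ[R] A, IsOneCocycle α → α x = 0) : x ∈ LieModule.ker R L A :=
  (LieModule.mem_ker R L A x).2 fun a => by simpa using hx _ (isOneCocycle_toEnd_flip a)

theorem IsOneCocycle.map_lie_of_mem_ker {α : L →ₗ[R] A} (hα : IsOneCocycle α) {z : L}
    (hz : z ∈ LieModule.ker R L A) (y : L) : α ⁅y, z⁆ = ⁅y, α z⁆ := by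
  rw [hα, (LieModule.mem_ker R L A z).1 hz, sub_zero]

theorem isOneCocycle_of_span_eq_top {α : L →ₗ[R] A} {s : Set L}
    (hs : Submodule.span R s = ⊤)
    (h : ∀ y ∈ s, ∀ z ∈ s, α ⁅y, z⁆ = ⁅y, α z⁆ - ⁅z, α y⁆) :
    IsOneCocycle α := by
  have hd : (LieModule.Cohomology.d₁₂ R L A α).val = 0 :=
    LinearMap.ext_on hs fun y hy => LinearMap.ext_on hs fun z hz => by
      simp [h y hy z hz]
  intro y z
  have := LinearMap.congr_fun₂ hd y z
  simp only [LieModule.Cohomology.twoCochain_val_apply, LieModule.Cohomology.d₁₂_apply_apply,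
    LinearMap.zero_apply] at this
  exact (sub_eq_zero.1 this).symm

theorem isOneCocycle_of_sup_ker_eq_top {M : LieSubalgebra R L}
    (hMI : M.toSubmodule ⊔ (LieModule.ker R L A).toSubmodule = ⊤) {α : L →ₗ[R] A}
    (hαM : ∀ m ∈ M, α m = 0)
    (hαI : ∀ z ∈ LieModule.ker R L A, ∀ y : L, α ⁅y, z⁆ = ⁅y, α z⁆) :
    IsOneCocycle α := by
  refine isOneCocycle_of_span_eq_top (s := (M : Set L) ∪ LieModule.ker R L A) ?_ ?_
  · rw [Submodule.span_union, ← hMI]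
    exact congrArg₂ (· ⊔ ·) (Submodule.span_eq M.toSubmodule) (Submodule.span_eq _)
  rintro y hy z hz
  by_cases hzI : z ∈ LieModule.ker R L A
  · rw [hαI z hzI, (LieModule.mem_ker R L A z).1 hzI, sub_zero]
  by_cases hyI : y ∈ LieModule.ker R L A
  · rw [← lie_skew, map_neg, hαI y hyI, (LieModule.mem_ker R L A y).1 hyI, zero_sub]
  have hyM : y ∈ M := hy.resolve_right hyI
  have hzM : z ∈ M := hz.resolve_right hzI
  rw [hαM _ (M.lie_mem hyM hzM), hαM y hyM, hαM z hzM, lie_zero, lie_zero, sub_zero]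

theorem LieSubalgebra.toSubmodule_sup_eq_top_of_maximal {M : LieSubalgebra R L}
    (hM : ∀ S : LieSubalgebra R L, M ≤ S → S = M ∨ S = ⊤) {I : LieIdeal R L}
    (hIM : ¬ (I : Set L) ⊆ M) : M.toSubmodule ⊔ I.toSubmodule = ⊤ := by
  let S : LieSubalgebra R L :=
    { toSubmodule := M.toSubmodule ⊔ I.toSubmodule
      lie_mem' := fun {y z} hy hz => by
        obtain ⟨m, hm, i, hi, rfl⟩ := Submodule.mem_sup.1 hy
        obtain ⟨m', hm', i', hi', rfl⟩ := Submodule.mem_sup.1 hz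
        rw [add_lie, lie_add]
        exact add_mem (add_mem (Submodule.mem_sup_left (M.lie_mem hm hm'))
          (Submodule.mem_sup_right (I.lie_mem hi')))
          (Submodule.mem_sup_right (lie_mem_left R L I i _ hi)) }
  rcases hM S fun y hy => Submodule.mem_sup_left hy with h | h
  · exact absurd (fun z hz => h ▸ Submodule.mem_sup_right hz) hIM
  · exact (LieSubalgebra.toSubmodule_eq_top S).2 h

theorem eq_bot_or_eq_top_of_sup_ker_eq_top [LieModule.IsIrreducible R L A] {M : LieSubalgebra R L}
    (hMI : M.toSubmodule ⊔ (LieModule.ker R L A).toSubmodule = ⊤) {N : Submodule R A}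
    (hN : ∀ m ∈ M, ∀ a ∈ N, ⁅m, a⁆ ∈ N) : N = ⊥ ∨ N = ⊤ := by
  let N' : LieSubmodule R L A :=
    { N with
      lie_mem := fun {y a} ha => by
        obtain ⟨m, hm, i, hi, rfl⟩ := Submodule.mem_sup.1 (hMI ▸ Submodule.mem_top : y ∈ _)
        rw [add_lie, (LieModule.mem_ker R L A i).1 hi, add_zero]
        exact hN m hm a ha }
  exact (IsSimpleOrder.eq_bot_or_eq_top N').imp (congrArg LieSubmodule.toSubmodule)
    (congrArg LieSubmodule.toSubmodule)

namespace IsOneCocycle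

variable {α : L →ₗ[R] A}

def kerIdeal (hα : IsOneCocycle α) : LieIdeal R L where
  toSubmodule := (LieModule.ker R L A).toSubmodule ⊓ LinearMap.ker α
  lie_mem := fun {y z} ⟨hzI, hz⟩ =>
    ⟨(LieModule.ker R L A).lie_mem hzI, by
      simpa [hα.map_lie_of_mem_ker hzI] using congrArg (⁅y, ·⁆) hz⟩

theorem map_ker_eq_top [LieModule.IsIrreducible R L A] (hα : IsOneCocycle α)
    (hne : ∃ z ∈ LieModule.ker R L A, α z ≠ 0) :
    (LieModule.ker R L A).toSubmodule.map α = ⊤ := by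
  obtain ⟨z, hz, hz0⟩ := hne
  refine (eq_bot_or_eq_top_of_sup_ker_eq_top (M := (⊤ : LieSubalgebra R L)) (by simp) ?_
    ).resolve_left fun h => hz0 ((Submodule.mem_bot R).1 (h ▸ Submodule.mem_map_of_mem hz))
  rintro m - _ ⟨w, hw, rfl⟩
  exact ⟨⁅m, w⁆, (LieModule.ker R L A).lie_mem hw, hα.map_lie_of_mem_ker hw m⟩

end IsOneCocycle

end Cocycle

section Field

variable {K L A : Type*} [Field K] [LieRing L] [LieAlgebra K L]
  [AddCommGroup A] [Module K A] [LieRingModule L A] [LieModule K L A]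
  [LieModule.IsIrreducible K L A]

theorem IsOneCocycle.nonFrattini_kerIdeal [FiniteDimensional K L] {α : L →ₗ[K] A}
    (hα : IsOneCocycle α) (hne : ∃ z ∈ LieModule.ker K L A, α z ≠ 0) :
    NonFrattini (LieModule.ker K L A : Set L) hα.kerIdeal := by
  let S : LieSubalgebra K L :=
    { toSubmodule := LinearMap.ker α
      lie_mem' := fun {y z} hy hz => by simp_all [hα y z] }
  have hsup : (LieModule.ker K L A).toSubmodule ⊔ LinearMap.ker α = ⊤ := by
    rw [← Submodule.comap_map_eq, hα.map_ker_eq_top hne, Submodule.comap_top]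
  obtain ⟨z, hz, hz0⟩ := hne
  obtain ⟨M, hM, hSM⟩ := (eq_top_or_exists_le_coatom S).resolve_left fun h =>
    hz0 (show z ∈ S from h ▸ trivial)
  refine ⟨M, fun x hx => hSM hx.2, hM.1, fun T hT => (hM.le_iff.1 hT).symm, fun hIM => hM.1 ?_⟩
  rw [← LieSubalgebra.toSubmodule_eq_top, eq_top_iff, ← hsup]
  exact sup_le hIM hSM

theorem exists_isOneCocycle_eqOn_ker {R : LieIdeal K L} {ψ : L →ₗ[K] A}
    (hψ : ∀ x ∈ LieModule.ker K L A, ∀ y : L, ψ ⁅y, x⁆ = ⁅y, ψ x⁆)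
    (hψR : ∀ x ∈ LieModule.ker K L A, ψ x = 0 ↔ x ∈ R)
    (hR : NonFrattini (LieModule.ker K L A : Set L) R) :
    ∃ α : L →ₗ[K] A, IsOneCocycle α ∧ ∀ x ∈ LieModule.ker K L A, α x = ψ x := by
  obtain ⟨M, hRM, -, hMmax, hIM⟩ := hR
  set I := LieModule.ker K L A
  have hMI := M.toSubmodule_sup_eq_top_of_maximal hMmax hIM
  have hstable : ∀ m ∈ M, ∀ a ∈ (M.toSubmodule ⊓ I.toSubmodule).map ψ,
      ⁅m, a⁆ ∈ (M.toSubmodule ⊓ I.toSubmodule).map ψ := by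
    rintro m hm _ ⟨w, ⟨hwM, hwI⟩, rfl⟩
    exact ⟨⁅m, w⁆, ⟨M.lie_mem hm hwM, I.lie_mem hwI⟩, hψ w hwI m⟩
  have hψMI : ∀ z ∈ M.toSubmodule ⊓ I.toSubmodule, ψ z = 0 := by
    rcases eq_bot_or_eq_top_of_sup_ker_eq_top hMI hstable with h | h
    · exact fun z hz => (Submodule.mem_bot K).1 (h ▸ Submodule.mem_map_of_mem hz)
    · -- `ψ(M ∩ I) = A` would force `I ⊆ M`, because `I ∩ ker ψ = R ⊆ M`
      refine absurd (fun z hz => ?_) hIM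
      have : z ∈ (M.toSubmodule ⊓ I.toSubmodule) ⊔ LinearMap.ker ψ := by
        rw [← Submodule.comap_map_eq, h]
        trivial
      obtain ⟨u, hu, v, hv, rfl⟩ := Submodule.mem_sup.1 this
      have hvI : v ∈ I := by simpa using sub_mem hz hu.2
      exact M.add_mem hu.1 (hRM ((hψR v hvI).1 hv))
  obtain ⟨α, hαM, hαI⟩ := LinearMap.exists_extend_by_zero_of_sup_eq_top hMI ψ hψMI
  refine ⟨α, isOneCocycle_of_sup_ker_eq_top hMI hαM fun z hz y => ?_, hαI⟩
  rw [hαI _ (I.lie_mem hz), hαI z hz, hψ z hz]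

end Field

/-- For an abelian irreducible `L`-module `A` over a finite-dimensional Lie
algebra `L`, `E_L(A) = D_L(A)`: the common kernel of all 1-cocycles equals the
intersection of all ideals `R ⊆ I = C_L(A)` with `I/R ≅_L A` a non-Frattini
chief factor (taken to be `I` when no such `R` exists). -/
theorem stmt14 {K L A : Type*} [Field K] [LieRing L] [LieAlgebra K L]
    [FiniteDimensional K L]
    [AddCommGroup A] [Module K A] [LieRingModule L A] [LieModule K L A]
    [LieModule.IsIrreducible K L A] :
    -- `E_L(A)`
    {x : L | ∀ α : L →ₗ[K] A, (∀ y z : L, α ⁅y, z⁆ = ⁅y, α z⁆ - ⁅z, α y⁆) → α x = 0} =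
      -- `D_L(A)`
      {z : L | ∀ a : A, ⁅z, a⁆ = 0} ∩
        ⋂ R ∈ {R : LieIdeal K L |
          (R : Set L) ⊆ {z : L | ∀ a : A, ⁅z, a⁆ = 0} ∧
          -- `I/R ≅_L A`
          (∃ ψ : L →ₗ[K] A,
            (∀ x ∈ {z : L | ∀ a : A, ⁅z, a⁆ = 0}, ∀ y : L, ψ ⁅y, x⁆ = ⁅y, ψ x⁆) ∧
            (∀ a : A, ∃ x ∈ {z : L | ∀ a : A, ⁅z, a⁆ = 0}, ψ x = a) ∧
            (∀ x ∈ {z : L | ∀ a : A, ⁅z, a⁆ = 0}, (ψ x = 0 ↔ x ∈ R))) ∧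
          -- `I/R` non-Frattini
          NonFrattini {z : L | ∀ a : A, ⁅z, a⁆ = 0} R}, (R : Set L) := by
  have hI : {z : L | ∀ a : A, ⁅z, a⁆ = 0} = (LieModule.ker K L A : Set L) :=
    Set.ext fun z => (LieModule.mem_ker K L A z).symm
  rw [hI]
  ext x
  simp only [Set.mem_inter_iff, Set.mem_iInter, SetLike.mem_coe]
  constructor
  · intro hx
    have hxI := mem_ker_of_forall_isOneCocycle hx
    refine ⟨hxI, fun R ⟨_, ⟨ψ, hψ, _, hψR⟩, hR⟩ => ?_⟩
    obtain ⟨α, hα, hαψ⟩ := exists_isOneCocycle_eqOn_ker hψ hψR hR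
    exact (hψR x hxI).1 (hαψ x hxI ▸ hx α hα)
  · rintro ⟨hxI, hxR⟩ α (hα : IsOneCocycle α)
    by_contra hαx
    have hne : ∃ z ∈ LieModule.ker K L A, α z ≠ 0 := ⟨x, hxI, hαx⟩
    have hsurj : ∀ a : A, ∃ z ∈ LieModule.ker K L A, α z = a := fun a =>
      Submodule.mem_map.1 (hα.map_ker_eq_top hne ▸ Submodule.mem_top)
    have hxα := hxR hα.kerIdeal ⟨fun z hz => hz.1,
      ⟨α, fun z hz => hα.map_lie_of_mem_ker hz, hsurj,
        fun z hz => ⟨fun h => ⟨hz, h⟩, And.right⟩⟩,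
      hα.nonFrattini_kerIdeal hne⟩
    exact hαx hxα.2
end

section
/- Let A be a nonabelian irreducible L-algebra over a finite-dimensional Lie algebra L. Then the core in A ⋊ L of E_L(A) equals the intersection of the centralizers C_L(B) over all L-algebras B that are L-equivalent to A; equivalently, E_L(A)_{A⋊L} = ∩ {C_L(A_α) : α ∈ Z¹(L,A)}, where E_L(A) = {x ∈ L : α(x) = 0 for all α ∈ Z¹(L,A)}. -/
/-- `1`-cocycles of `L` with values in the `L`-algebra `A`. -/
def IsCocycle {K L A : Type*} [Field K] [LieRing L] [LieAlgebra K L]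
    [LieRing A] [LieAlgebra K A] (θ : L →ₗ⁅K⁆ LieDerivation K A A)
    (α : L →ₗ[K] A) : Prop :=
  ∀ x y : L, α ⁅x, y⁆ = θ x (α y) - θ y (α x) + ⁅α x, α y⁆

/-!
An ideal `I` of `A ⋊ L` contained in `E_L(A) ⊆ L` satisfies `⁅A, I⁆ ⊆ A ∩ I = 0`, so it lies in
`ker θ ∩ E_L(A)`; conversely `ker θ ∩ E_L(A)` is itself an ideal of `A ⋊ L` (the cocycle identity
kills `α ⁅x, y⁆` once `θ y = 0` and `α y = 0`), so it is the core of `E_L(A)`. For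
`y ∈ ker θ` the twisted action of `y` on `A_α` is `ad (α y)`, and `α y = 0` is then equivalent to
`α y` being central; irreducibility and nonabelianness make the centre of `A` trivial.
-/

section

variable {K L A : Type*} [Field K] [LieRing L] [LieAlgebra K L] [LieRing A] [LieAlgebra K A]
  (θ : L →ₗ⁅K⁆ LieDerivation K A A)

lemma isCocycle_zero : IsCocycle θ 0 := fun x y => by simp

def cocycleKernelCore : Submodule K L :=
  LinearMap.ker (θ : L →ₗ[K] LieDerivation K A A) ⊓
    ⨅ (α : L →ₗ[K] A) (_ : IsCocycle θ α), LinearMap.ker α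

variable {θ}

lemma mem_cocycleKernelCore {x : L} :
    x ∈ cocycleKernelCore θ ↔ θ x = 0 ∧ ∀ α, IsCocycle θ α → α x = 0 := by
  simp only [cocycleKernelCore, Submodule.mem_inf, Submodule.mem_iInf, LinearMap.mem_ker,
    LieHom.coe_toLinearMap]

lemma lie_mem_cocycleKernelCore {y : L} (hy : y ∈ cocycleKernelCore θ) (x : L) :
    ⁅x, y⁆ ∈ cocycleKernelCore θ := by
  rw [mem_cocycleKernelCore] at hy ⊢
  obtain ⟨hθy, hαy⟩ := hy
  refine ⟨by simp [hθy], fun α hα => ?_⟩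
  rw [hα, hαy α hα]
  simp [hθy]

lemma sdBracket_mem_prod_cocycleKernelCore {p : A × L}
    (hp : p ∈ (⊥ : Submodule K A).prod (cocycleKernelCore θ)) (q : A × L) :
    sdBracket θ q p ∈ (⊥ : Submodule K A).prod (cocycleKernelCore θ) := by
  obtain ⟨hp₁, hp₂⟩ := Submodule.mem_prod.1 hp
  rw [Submodule.mem_bot] at hp₁
  refine Submodule.mem_prod.2 ⟨?_, lie_mem_cocycleKernelCore hp₂ q.2⟩
  simp [sdBracket, hp₁, (mem_cocycleKernelCore.1 hp₂).1]

lemma exists_ideal_mem_iff_mem_cocycleKernelCore (x : L) :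
    (∃ S : Submodule K (A × L),
        (∀ p ∈ S, ∀ q : A × L, sdBracket θ q p ∈ S) ∧
        (∀ p ∈ S, p.1 = 0 ∧ ∀ α : L →ₗ[K] A, IsCocycle θ α → α p.2 = 0) ∧
        ((0 : A), x) ∈ S) ↔
      x ∈ cocycleKernelCore θ := by
  constructor
  · rintro ⟨S, hideal, hle, hx⟩
    refine mem_cocycleKernelCore.2 ⟨LieDerivation.ext fun a => ?_, (hle _ hx).2⟩
    simpa [sdBracket] using (hle _ (hideal _ hx (a, 0))).1
  · intro hx
    refine ⟨(⊥ : Submodule K A).prod (cocycleKernelCore θ),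
      fun p hp q => sdBracket_mem_prod_cocycleKernelCore hp q, fun p hp => ?_, by simpa using hx⟩
    obtain ⟨hp₁, hp₂⟩ := Submodule.mem_prod.1 hp
    exact ⟨(Submodule.mem_bot K).1 hp₁, (mem_cocycleKernelCore.1 hp₂).2⟩

lemma mem_cocycleKernelCore_iff_of_center_eq_bot (hZ : LieAlgebra.center K A = ⊥) (x : L) :
    x ∈ cocycleKernelCore θ ↔ ∀ α, IsCocycle θ α → ∀ a, ⁅α x, a⁆ + θ x a = 0 := by
  rw [mem_cocycleKernelCore]
  refine ⟨fun ⟨hθx, hαx⟩ α hα a => by simp [hθx, hαx α hα], fun h => ?_⟩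
  have hθx : θ x = 0 := LieDerivation.ext fun a => by simpa using h 0 (isCocycle_zero θ) a
  refine ⟨hθx, fun α hα => ?_⟩
  have hcen : α x ∈ LieAlgebra.center K A := (LieModule.mem_maxTrivSubmodule K A A _).2 fun a => by
    rw [← lie_skew, neg_eq_zero]
    simpa [hθx] using h α hα a
  simpa [hZ] using hcen

variable (θ) in
lemma center_eq_bot_of_irreducible
    (hirr : ∀ S : Submodule K A, (∀ (x : L), ∀ a ∈ S, θ x a ∈ S) → S = ⊥ ∨ S = ⊤)
    (hnonab : ¬ IsLieAbelian A) :
    LieAlgebra.center K A = ⊥ := by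
  have hinv : ∀ (x : L), ∀ z ∈ (LieAlgebra.center K A).toSubmodule,
      θ x z ∈ (LieAlgebra.center K A).toSubmodule := by
    intro x z hz
    rw [LieSubmodule.mem_toSubmodule, LieModule.mem_maxTrivSubmodule] at hz ⊢
    intro b
    have hleibniz := (θ x).apply_lie_eq_sub b z
    rw [hz b, map_zero, ← lie_skew z (θ x b), hz, neg_zero, sub_zero] at hleibniz
    exact hleibniz.symm
  rcases hirr _ hinv with h | h
  · exact (LieSubmodule.toSubmodule_eq_bot _).1 h
  · exact absurd ((LieAlgebra.isLieAbelian_iff_center_eq_top K A).2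
      ((LieSubmodule.toSubmodule_eq_top _).1 h)) hnonab

end

theorem stmt15_general {K L A : Type*} [Field K] [LieRing L] [LieAlgebra K L]
    [LieRing A] [LieAlgebra K A]
    (θ : L →ₗ⁅K⁆ LieDerivation K A A)
    (hirr : ∀ S : Submodule K A, (∀ (x : L), ∀ a ∈ S, θ x a ∈ S) → S = ⊥ ∨ S = ⊤)
    (hnonab : ¬ IsLieAbelian A) :
    {x : L | ∃ S : Submodule K (A × L),
        (∀ p ∈ S, ∀ q : A × L, sdBracket θ q p ∈ S) ∧
        (∀ p ∈ S, p.1 = 0 ∧ ∀ α : L →ₗ[K] A, IsCocycle θ α → α p.2 = 0) ∧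
        ((0 : A), x) ∈ S} =
      {x : L | ∀ α : L →ₗ[K] A, IsCocycle θ α → ∀ a : A, ⁅α x, a⁆ + θ x a = 0} := by
  have hZ := center_eq_bot_of_irreducible θ hirr hnonab
  ext x
  exact (exists_ideal_mem_iff_mem_cocycleKernelCore x).trans
    (mem_cocycleKernelCore_iff_of_center_eq_bot hZ x)

/-- Let `A` be a nonabelian irreducible `L`-algebra.  Then the core in `A ⋊ L`
of `E_L(A) = {x ∈ L : α(x) = 0 for all α ∈ Z¹(L,A)}` equals
`⋂ {C_L(A_α) : α ∈ Z¹(L,A)}`, the intersection of the centralizers of all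
`L`-algebras `L`-equivalent to `A`.  The core is described as the union of all
ideals of `A ⋊ L` contained in `E_L(A)` (viewed inside `A ⋊ L`). -/
theorem stmt15 {K L A : Type*} [Field K] [LieRing L] [LieAlgebra K L]
    [FiniteDimensional K L] [LieRing A] [LieAlgebra K A]
    (θ : L →ₗ⁅K⁆ LieDerivation K A A)
    (hirr : ∀ S : Submodule K A, (∀ (x : L), ∀ a ∈ S, θ x a ∈ S) → S = ⊥ ∨ S = ⊤)
    (hnz : Nontrivial A)
    (hnonab : ¬ IsLieAbelian A) :
    {x : L | ∃ S : Submodule K (A × L),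
        (∀ p ∈ S, ∀ q : A × L, sdBracket θ q p ∈ S) ∧
        (∀ p ∈ S, p.1 = 0 ∧ ∀ α : L →ₗ[K] A, IsCocycle θ α → α p.2 = 0) ∧
        ((0 : A), x) ∈ S} =
      {x : L | ∀ α : L →ₗ[K] A, IsCocycle θ α → ∀ a : A, ⁅α x, a⁆ + θ x a = 0} :=
  stmt15_general θ hirr hnonab
end

section
/- Let L be a finite-dimensional Lie algebra, and suppose B*/B is a nonabelian chief factor of L that is not complemented, A*/A is a nonabelian chief factor that is complemented, and B* = A* + B with A* ∩ B = A (i.e., B*/B ↘ A*/A). Let I = I_L(A*/A) and C = C_L(A*/A). Then B ⊆ C, B* + C = I, B* ∩ C = B (so I/C ↘ B*/B), and I/C is a chief factor of L that is not complemented. -/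
/-- The chief factor `X/Y` is complemented (a `c`-factor): some subalgebra `U`
satisfies `L = X + U` and `X ∩ U = Y`. -/
def IsComplementedFactor {K L : Type*} [Field K] [LieRing L] [LieAlgebra K L]
    (X Y : LieIdeal K L) : Prop :=
  ∃ U : LieSubalgebra K L, (∀ z : L, ∃ a ∈ X, ∃ u ∈ U, z = a + u) ∧
    (∀ z : L, (z ∈ X ∧ z ∈ U) ↔ z ∈ Y)

/-- The centralizer of `As/A` as a Lie ideal. -/
def centFactor {K L : Type*} [Field K] [LieRing L] [LieAlgebra K L]
    (As A : LieIdeal K L) : LieIdeal K L where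
  carrier := {x : L | ∀ a ∈ As, ⁅x, a⁆ ∈ A}
  add_mem' := by
    intro x y hx hy a ha
    rw [add_lie]; exact A.add_mem (hx a ha) (hy a ha)
  zero_mem' := by intro a _; rw [zero_lie]; exact A.zero_mem
  smul_mem' := by
    intro c x hx a ha
    rw [smul_lie]; exact A.smul_mem c (hx a ha)
  lie_mem := by
    intro x m hm a ha
    rw [lie_lie]
    exact A.sub_mem (A.lie_mem (hm a ha)) (hm _ (As.lie_mem ha))

/-- Suppose `B*/B` is a nonabelian non-complemented chief factor of `L`,
`A*/A` is a nonabelian complemented chief factor, and `B*/B ↘ A*/A`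
(`B* = A* + B`, `A* ∩ B = A`).  With `I = I_L(A*/A)` and `C = C_L(A*/A)` we
have `B ⊆ C`, `B* + C = I`, `B* ∩ C = B` (so `I/C ↘ B*/B`), and `I/C` is a
chief factor of `L` that is not complemented. -/
theorem stmt17 {K L : Type*} [Field K] [LieRing L] [LieAlgebra K L]
    [FiniteDimensional K L]
    (Bs B As A : LieIdeal K L) (hB : B ≤ Bs) (hA : A ≤ As)
    (hchiefB : IsChiefFactor Bs B) (hchiefA : IsChiefFactor As A)
    (hnonabB : ∃ a ∈ Bs, ∃ b ∈ Bs, ⁅a, b⁆ ∉ B)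
    (hnonabA : ∃ a ∈ As, ∃ b ∈ As, ⁅a, b⁆ ∉ A)
    (hnotc : ¬ IsComplementedFactor Bs B) (hc : IsComplementedFactor As A)
    (hBsum : Bs = As ⊔ B) (hBint : As ⊓ B = A) :
    ((B : Set L) ⊆ {x : L | ∀ a ∈ As, ⁅x, a⁆ ∈ A}) ∧
    ({x : L | ∃ a ∈ As, ∀ c ∈ As, ⁅x, c⁆ - ⁅a, c⁆ ∈ A} =
      {x : L | ∃ b ∈ Bs, ∃ c ∈ {z : L | ∀ a ∈ As, ⁅z, a⁆ ∈ A}, x = b + c}) ∧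
    ({x : L | x ∈ Bs ∧ x ∈ {z : L | ∀ a ∈ As, ⁅z, a⁆ ∈ A}} = (B : Set L)) ∧
    (∃ Ii Ci : LieIdeal K L,
      (Ci : Set L) = {z : L | ∀ a ∈ As, ⁅z, a⁆ ∈ A} ∧
      (Ii : Set L) = {x : L | ∃ a ∈ As, ∀ c ∈ As, ⁅x, c⁆ - ⁅a, c⁆ ∈ A} ∧
      IsChiefFactor Ii Ci ∧ ¬ IsComplementedFactor Ii Ci) := by
  set C : LieIdeal K L := centFactor As A with hCdef
  have hmemC : ∀ x : L, x ∈ C ↔ ∀ a ∈ As, ⁅x, a⁆ ∈ A := fun _ => Iff.rfl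
  -- B ≤ C
  have hBC : B ≤ C := by
    intro b hb
    rw [hmemC]
    intro a ha
    have h1 : ⁅b, a⁆ ∈ As := As.lie_mem ha
    have h2 : ⁅b, a⁆ ∈ B := by
      have : ⁅a, b⁆ ∈ B := B.lie_mem hb
      rw [← lie_skew]; exact B.neg_mem this
    rw [← hBint]; exact ⟨h1, h2⟩
  -- As ≤ Bs
  have hAsBs : As ≤ Bs := hBsum ▸ le_sup_left
  -- As ⊄ C
  have hAsnotC : ¬ As ≤ C := by
    intro hle
    obtain ⟨a, ha, b, hb, hab⟩ := hnonabA
    exact hab ((hmemC a).mp (hle ha) b hb)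
  -- Bs ⊓ C = B
  have hBsC : Bs ⊓ C = B := by
    rcases hchiefB.2 (Bs ⊓ C) (le_inf hB hBC) inf_le_left with h | h
    · exact h
    · exfalso
      exact hAsnotC (le_trans hAsBs (h ▸ inf_le_right : Bs ≤ C))
  set Ii : LieIdeal K L := As ⊔ C with hIidef
  -- Ii = Bs ⊔ C
  have hIiBsC : Ii = Bs ⊔ C := by
    apply le_antisymm (sup_le (le_trans hAsBs le_sup_left) le_sup_right)
    apply sup_le _ le_sup_right
    rw [hBsum]
    exact sup_le le_sup_left (le_trans hBC le_sup_right)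
  have hBsIi : Bs ≤ Ii := hIiBsC ▸ le_sup_left
  have hCIi : C ≤ Ii := le_sup_right
  -- membership in Ii via the "∃ a, x - a ∈ C" description
  have hmemIi : ∀ x : L, x ∈ Ii ↔ ∃ a ∈ As, ∀ c ∈ As, ⁅x, c⁆ - ⁅a, c⁆ ∈ A := by
    intro x
    rw [hIidef, LieSubmodule.mem_sup]
    constructor
    · rintro ⟨a, ha, z, hz, rfl⟩
      refine ⟨a, ha, fun c hc => ?_⟩
      have : ⁅a + z, c⁆ - ⁅a, c⁆ = ⁅z, c⁆ := by rw [add_lie]; abel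
      rw [this]; exact (hmemC z).mp hz c hc
    · rintro ⟨a, ha, hxa⟩
      refine ⟨a, ha, x - a, ?_, by abel⟩
      rw [hmemC]
      intro c hc
      have : ⁅x - a, c⁆ = ⁅x, c⁆ - ⁅a, c⁆ := sub_lie x a c
      rw [this]; exact hxa c hc
  -- similarly, membership via Bs ⊔ C
  have hmemIi' : ∀ x : L, x ∈ Ii ↔ ∃ b ∈ Bs, ∃ c ∈ C, x = b + c := by
    intro x
    rw [hIiBsC, LieSubmodule.mem_sup]
    constructor
    · rintro ⟨b, hb, c, hc, rfl⟩; exact ⟨b, hb, c, hc, rfl⟩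
    · rintro ⟨b, hb, c, hc, rfl⟩; exact ⟨b, hb, c, hc, rfl⟩
  refine ⟨hBC, ?_, ?_, Ii, C, rfl, ?_, ?_, ?_⟩
  · -- Ii = Bs + C as sets
    ext x
    simp only [Set.mem_setOf_eq]
    rw [← hmemIi x, hmemIi' x]
    rfl
  · -- Bs ∩ C = B as sets
    ext x
    simp only [Set.mem_setOf_eq, SetLike.mem_coe]
    constructor
    · intro ⟨h1, h2⟩
      rw [← hBsC]; exact ⟨h1, h2⟩
    · intro hx
      exact ⟨hB hx, hBC hx⟩
  · -- (Ii : Set L) description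
    ext x
    exact hmemIi x
  · -- chief factor
    constructor
    · refine lt_of_le_of_ne hCIi ?_
      intro h
      exact hAsnotC (h ▸ le_sup_left : As ≤ C)
    · intro D hCD hDIi
      rcases hchiefB.2 (D ⊓ Bs) (le_inf (le_trans hBC hCD) hB) inf_le_right with h | h
      · left
        refine le_antisymm ?_ hCD
        intro d hd
        obtain ⟨b, hb, c, hcC, rfl⟩ := (hmemIi' (d : L)).mp (hDIi hd)
        have hbD : b ∈ D := by
          have : b = (b + c) - c := by abel
          rw [this]
          exact D.sub_mem hd (hCD hcC)
        have hbB : b ∈ B := h ▸ (⟨hbD, hb⟩ : b ∈ D ⊓ Bs)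
        exact C.add_mem (hBC hbB) hcC
      · right
        refine le_antisymm hDIi ?_
        rw [hIiBsC]
        exact sup_le (h ▸ inf_le_left : Bs ≤ D) hCD
  · -- not complemented
    rintro ⟨U, hU1, hU2⟩
    apply hnotc
    refine ⟨U, ?_, ?_⟩
    · intro z
      obtain ⟨i, hi, u, hu, rfl⟩ := hU1 z
      obtain ⟨b, hb, c, hcC, rfl⟩ := (hmemIi' i).mp hi
      have hcU : c ∈ U := ((hU2 c).mpr hcC).2
      exact ⟨b, hb, c + u, U.add_mem hcU hu, by abel⟩
    · intro z
      constructor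
      · intro ⟨hzBs, hzU⟩
        have hzC : z ∈ C := (hU2 z).mp ⟨hBsIi hzBs, hzU⟩
        rw [← hBsC]; exact ⟨hzBs, hzC⟩
      · intro hz
        exact ⟨hB hz, ((hU2 z).mpr (hBC hz)).2⟩
end

section
/- Let L be a finite-dimensional Lie algebra, N an ideal of L, and A an L-module with N ⊆ C_L(A). Then the following are equivalent: (1) N ⊆ E_L(A) := {x ∈ L : α(x) = 0 for all α ∈ Z¹(L,A)}; (2) the inflation map Z¹(L/N, A) → Z¹(L,A) is bijective; (3) the inflation map H¹(L/N, A) → H¹(L,A) is bijective. -/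
/-!
A cocycle `α` on `L` is inflated from `L/N` exactly when it factors through `L → L/N`, i.e. when
it vanishes on `N`, and then the factorisation is unique. Modulo coboundaries nothing changes,
because a coboundary `x ↦ ⁅x, a⁆` already vanishes on `N ⊆ C_L(A)`.
-/

namespace LieIdeal

variable {K L A : Type*} [CommRing K] [LieRing L] [LieAlgebra K L]
  [AddCommGroup A] [Module K A] {N : LieIdeal K L}

theorem map_mk_eq_zero_of_mem (γ : (L ⧸ N) →ₗ[K] A) {x : L} (hx : x ∈ N) :
    γ (LieSubmodule.Quotient.mk (N := N) x) = 0 := by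
  rw [LieSubmodule.Quotient.mk_eq_zero'.mpr hx, map_zero]

variable [LieRingModule L A]

theorem existsUnique_cocycle_lift_of_forall_mem_eq_zero (α : L →ₗ[K] A)
    (hα : ∀ x y : L, α ⁅x, y⁆ = ⁅x, α y⁆ - ⁅y, α x⁆) (h0 : ∀ x ∈ N, α x = 0) :
    ∃! γ : (L ⧸ N) →ₗ[K] A,
      (∀ x y : L, γ (LieSubmodule.Quotient.mk (N := N) ⁅x, y⁆) =
        ⁅x, γ (LieSubmodule.Quotient.mk (N := N) y)⁆ -
          ⁅y, γ (LieSubmodule.Quotient.mk (N := N) x)⁆) ∧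
      ∀ x : L, γ (LieSubmodule.Quotient.mk (N := N) x) = α x :=
  ⟨N.toSubmodule.liftQ α h0, ⟨hα, fun _ ↦ rfl⟩,
    fun _ ⟨_, hγ⟩ ↦ Submodule.linearMap_qext _ (LinearMap.ext hγ)⟩

theorem forall_mem_eq_zero_of_eq_add_lie {α : L → A} {γ : (L ⧸ N) →ₗ[K] A} {a : A}
    (ha : ∀ x ∈ N, ⁅x, a⁆ = 0)
    (h : ∀ x : L, α x = γ (LieSubmodule.Quotient.mk (N := N) x) + ⁅x, a⁆) :
    ∀ x ∈ N, α x = 0 := fun x hx ↦ by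
  rw [h x, map_mk_eq_zero_of_mem γ hx, ha x hx, add_zero]

end LieIdeal

open LieIdeal in
theorem stmt18_general {K L A : Type*} [Field K] [LieRing L] [LieAlgebra K L]
    [AddCommGroup A] [Module K A] [LieRingModule L A]
    (N : LieIdeal K L) (hN : ∀ x ∈ N, ∀ a : A, ⁅x, a⁆ = 0) :
    -- (1) ↔ (2)
    ((∀ α : L →ₗ[K] A, (∀ x y : L, α ⁅x, y⁆ = ⁅x, α y⁆ - ⁅y, α x⁆) →
        ∀ x ∈ N, α x = 0) ↔
      (∀ α : L →ₗ[K] A, (∀ x y : L, α ⁅x, y⁆ = ⁅x, α y⁆ - ⁅y, α x⁆) →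
        ∃! γ : (L ⧸ N) →ₗ[K] A,
          (∀ x y : L, γ (LieSubmodule.Quotient.mk (N := N) ⁅x, y⁆) =
            ⁅x, γ (LieSubmodule.Quotient.mk (N := N) y)⁆ -
              ⁅y, γ (LieSubmodule.Quotient.mk (N := N) x)⁆) ∧
          ∀ x : L, γ (LieSubmodule.Quotient.mk (N := N) x) = α x)) ∧
    -- (1) ↔ (3)
    ((∀ α : L →ₗ[K] A, (∀ x y : L, α ⁅x, y⁆ = ⁅x, α y⁆ - ⁅y, α x⁆) →
        ∀ x ∈ N, α x = 0) ↔
      ((∀ α : L →ₗ[K] A, (∀ x y : L, α ⁅x, y⁆ = ⁅x, α y⁆ - ⁅y, α x⁆) →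
        ∃ γ : (L ⧸ N) →ₗ[K] A,
          (∀ x y : L, γ (LieSubmodule.Quotient.mk (N := N) ⁅x, y⁆) =
            ⁅x, γ (LieSubmodule.Quotient.mk (N := N) y)⁆ -
              ⁅y, γ (LieSubmodule.Quotient.mk (N := N) x)⁆) ∧
          ∃ a : A, ∀ x : L, α x = γ (LieSubmodule.Quotient.mk (N := N) x) + ⁅x, a⁆) ∧
      (∀ γ γ' : (L ⧸ N) →ₗ[K] A,
        (∀ x y : L, γ (LieSubmodule.Quotient.mk (N := N) ⁅x, y⁆) =
          ⁅x, γ (LieSubmodule.Quotient.mk (N := N) y)⁆ -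
            ⁅y, γ (LieSubmodule.Quotient.mk (N := N) x)⁆) →
        (∀ x y : L, γ' (LieSubmodule.Quotient.mk (N := N) ⁅x, y⁆) =
          ⁅x, γ' (LieSubmodule.Quotient.mk (N := N) y)⁆ -
            ⁅y, γ' (LieSubmodule.Quotient.mk (N := N) x)⁆) →
        (∃ a : A, ∀ x : L, γ (LieSubmodule.Quotient.mk (N := N) x) -
            γ' (LieSubmodule.Quotient.mk (N := N) x) = ⁅x, a⁆) →
        ∃ a : A, ∀ x : L, γ (LieSubmodule.Quotient.mk (N := N) x) -
            γ' (LieSubmodule.Quotient.mk (N := N) x) = ⁅x, a⁆))) := by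
  refine ⟨⟨fun h1 α hα ↦ existsUnique_cocycle_lift_of_forall_mem_eq_zero α hα (h1 α hα),
      fun h2 α hα ↦ ?_⟩,
    ⟨fun h1 ↦ ⟨fun α hα ↦ ?_, fun _ _ _ _ h ↦ h⟩, fun ⟨h3, _⟩ α hα ↦ ?_⟩⟩
  · obtain ⟨γ, ⟨-, hγ⟩, -⟩ := h2 α hα
    exact fun x hx ↦ (hγ x).symm.trans (map_mk_eq_zero_of_mem γ hx)
  · obtain ⟨γ, ⟨hγ, hαγ⟩, -⟩ := existsUnique_cocycle_lift_of_forall_mem_eq_zero α hα (h1 α hα)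
    exact ⟨γ, hγ, 0, fun x ↦ by rw [hαγ x, lie_zero, add_zero]⟩
  · obtain ⟨γ, -, a, hαγ⟩ := h3 α hα
    exact forall_mem_eq_zero_of_eq_add_lie (fun x hx ↦ hN x hx a) hαγ

/-- Let `N` be an ideal of the finite-dimensional Lie algebra `L` and `A` an
`L`-module with `N ⊆ C_L(A)` (so that `A^N = A` and `A` is naturally an
`L/N`-module).  The following are equivalent:
(1) `N ⊆ E_L(A) = {x ∈ L : α(x) = 0 for all α ∈ Z¹(L,A)}`;
(2) the inflation map `Z¹(L/N, A) → Z¹(L,A)` is bijective: every cocycle on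
    `L` arises from a unique cocycle on `L/N`;
(3) the inflation map `H¹(L/N, A) → H¹(L,A)` is bijective: every cocycle on
    `L` is, modulo a coboundary `x ↦ x·a`, inflated from a cocycle on `L/N`,
    and inflation is injective modulo coboundaries. -/
theorem stmt18 {K L A : Type*} [Field K] [LieRing L] [LieAlgebra K L]
    [FiniteDimensional K L]
    [AddCommGroup A] [Module K A] [LieRingModule L A] [LieModule K L A]
    (N : LieIdeal K L) (hN : ∀ x ∈ N, ∀ a : A, ⁅x, a⁆ = 0) :
    -- (1) ↔ (2)
    ((∀ α : L →ₗ[K] A, (∀ x y : L, α ⁅x, y⁆ = ⁅x, α y⁆ - ⁅y, α x⁆) →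
        ∀ x ∈ N, α x = 0) ↔
      (∀ α : L →ₗ[K] A, (∀ x y : L, α ⁅x, y⁆ = ⁅x, α y⁆ - ⁅y, α x⁆) →
        ∃! γ : (L ⧸ N) →ₗ[K] A,
          (∀ x y : L, γ (LieSubmodule.Quotient.mk (N := N) ⁅x, y⁆) =
            ⁅x, γ (LieSubmodule.Quotient.mk (N := N) y)⁆ -
              ⁅y, γ (LieSubmodule.Quotient.mk (N := N) x)⁆) ∧
          ∀ x : L, γ (LieSubmodule.Quotient.mk (N := N) x) = α x)) ∧
    -- (1) ↔ (3)
    ((∀ α : L →ₗ[K] A, (∀ x y : L, α ⁅x, y⁆ = ⁅x, α y⁆ - ⁅y, α x⁆) →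
        ∀ x ∈ N, α x = 0) ↔
      ((∀ α : L →ₗ[K] A, (∀ x y : L, α ⁅x, y⁆ = ⁅x, α y⁆ - ⁅y, α x⁆) →
        ∃ γ : (L ⧸ N) →ₗ[K] A,
          (∀ x y : L, γ (LieSubmodule.Quotient.mk (N := N) ⁅x, y⁆) =
            ⁅x, γ (LieSubmodule.Quotient.mk (N := N) y)⁆ -
              ⁅y, γ (LieSubmodule.Quotient.mk (N := N) x)⁆) ∧
          ∃ a : A, ∀ x : L, α x = γ (LieSubmodule.Quotient.mk (N := N) x) + ⁅x, a⁆) ∧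
      (∀ γ γ' : (L ⧸ N) →ₗ[K] A,
        (∀ x y : L, γ (LieSubmodule.Quotient.mk (N := N) ⁅x, y⁆) =
          ⁅x, γ (LieSubmodule.Quotient.mk (N := N) y)⁆ -
            ⁅y, γ (LieSubmodule.Quotient.mk (N := N) x)⁆) →
        (∀ x y : L, γ' (LieSubmodule.Quotient.mk (N := N) ⁅x, y⁆) =
          ⁅x, γ' (LieSubmodule.Quotient.mk (N := N) y)⁆ -
            ⁅y, γ' (LieSubmodule.Quotient.mk (N := N) x)⁆) →
        (∃ a : A, ∀ x : L, γ (LieSubmodule.Quotient.mk (N := N) x) -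
            γ' (LieSubmodule.Quotient.mk (N := N) x) = ⁅x, a⁆) →
        ∃ a : A, ∀ x : L, γ (LieSubmodule.Quotient.mk (N := N) x) -
            γ' (LieSubmodule.Quotient.mk (N := N) x) = ⁅x, a⁆))) :=
  stmt18_general N hN
end
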